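/- arXiv:1804.10185 — 5 statements merged into one kernel-verified Lean document; each statement's English description precedes it below -/
import Mathlib

section
/- Let m and n be natural numbers with m ≤ n. The number of anti-involutive functions f : Fin m → Fin n equals, as an integer, I(m,n) := ∑_{i=0}^{⌊m/2⌋} (−1)^i · (n−1)^{m−2i} · C(m, 2i) · (2i)!/(2^i · i!). -/
/-- A function `f : Fin m → Fin n` (with `m ≤ n`, viewing `Fin m` as the initial
segment of `Fin n`) is anti-involutive if whenever `f x` lands back in the initial
segment `{0, …, m-1}`, applying `f` again does not return to `x`. -/
def AntiInvol {m n : ℕ} (h : m ≤ n) (f : Fin m → Fin n) : Prop :=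
  ∀ (x : Fin m) (hx : (f x).val < m), f ⟨(f x).val, hx⟩ ≠ Fin.castLE h x

open Finset Function


variable {n : ℕ}

def IsGood (S : Finset (Fin n)) (f : Fin n → Fin n) : Prop :=
  (∀ x, x ∉ S → f x = x) ∧ ∀ x ∈ S, f x ∈ S → f (f x) ≠ x

noncomputable def cnt (n : ℕ) (S : Finset (Fin n)) : ℕ :=
  Nat.card {f : Fin n → Fin n // IsGood S f}

lemma isGood_empty (f : Fin n → Fin n) : IsGood ∅ f ↔ f = id := by
  constructor
  · rintro ⟨h1, -⟩; funext x; exact h1 x (by simp)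
  · rintro rfl; exact ⟨fun x _ => rfl, by simp⟩

lemma cnt_empty : cnt n ∅ = 1 := by
  rw [cnt, Nat.card_eq_one_iff_unique]
  constructor
  · constructor
    rintro ⟨f, hf⟩ ⟨g, hg⟩
    simp only [isGood_empty] at hf hg
    simp [hf, hg]
  · exact ⟨⟨id, (isGood_empty id).2 rfl⟩⟩

lemma isGood_image (σ : Equiv.Perm (Fin n)) {S : Finset (Fin n)} {f : Fin n → Fin n}
    (hf : IsGood S f) : IsGood (S.image σ) (σ ∘ f ∘ σ.symm) := by
  obtain ⟨h1, h2⟩ := hf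
  constructor
  · intro x hx
    have : σ.symm x ∉ S := by
      intro hc
      exact hx (mem_image.2 ⟨σ.symm x, hc, by simp⟩)
    simp [h1 _ this]
  · intro x hx hfx heq
    simp only [mem_image] at hx hfx
    obtain ⟨y, hy, rfl⟩ := hx
    simp only [Function.comp_apply, Equiv.symm_apply_apply] at hfx heq
    obtain ⟨z, hz, hzz⟩ := hfx
    have hz' : f y ∈ S := by
      have : f y = z := σ.injective hzz.symm
      rwa [this]
    exact h2 y hy hz' (σ.injective heq)

lemma cnt_image (σ : Equiv.Perm (Fin n)) (S : Finset (Fin n)) :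
    cnt n (S.image σ) = cnt n S := by
  apply Nat.card_congr
  refine ⟨fun g => ⟨σ.symm ∘ g.1 ∘ σ, ?_⟩, fun f => ⟨σ ∘ f.1 ∘ σ.symm, isGood_image σ f.2⟩, ?_, ?_⟩
  · have := isGood_image σ.symm g.2
    rwa [Finset.image_image, show (⇑σ.symm ∘ ⇑σ) = id from funext (by simp), Finset.image_id,
      Equiv.symm_symm] at this
  · rintro ⟨f, hf⟩; ext x; simp
  · rintro ⟨g, hg⟩; ext x; simp

lemma cnt_card (S T : Finset (Fin n)) (h : S.card = T.card) : cnt n S = cnt n T := by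
  have h1 : Fintype.card {x // x ∈ S} = Fintype.card {x // x ∈ T} := by
    simp [Fintype.card_coe, h]
  have h2 : Fintype.card {x // ¬ x ∈ S} = Fintype.card {x // ¬ x ∈ T} := by
    rw [Fintype.card_subtype_compl, Fintype.card_subtype_compl, h1]
  let e := Fintype.equivOfCardEq h1
  let f := Fintype.equivOfCardEq h2
  have himg : S.image (Equiv.subtypeCongr e f) = T := by
    apply Finset.eq_of_subset_of_card_le
    · intro y hy
      simp only [mem_image] at hy
      obtain ⟨x, hx, rfl⟩ := hy
      have : Equiv.subtypeCongr e f x = (e ⟨x, hx⟩ : Fin n) := by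
        simp [Equiv.subtypeCongr, hx]
      rw [this]
      exact (e ⟨x, hx⟩).2
    · rw [Finset.card_image_of_injective _ (Equiv.injective _), h]
  rw [← himg, cnt_image]

/-- Split a subtype by a decidable condition. -/
def splitEquiv {α : Type*} (P Q : α → Prop) [DecidablePred Q] :
    {x // P x} ≃ {x // P x ∧ Q x} ⊕ {x // P x ∧ ¬ Q x} where
  toFun x := if h : Q x.1 then .inl ⟨x.1, x.2, h⟩ else .inr ⟨x.1, x.2, h⟩
  invFun := Sum.elim (fun x => ⟨x.1, x.2.1⟩) (fun x => ⟨x.1, x.2.1⟩)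
  left_inv x := by by_cases h : Q x.1 <;> simp [h]
  right_inv x := by rcases x with ⟨x, hx⟩ | ⟨x, hx⟩ <;> simp [hx.2]

lemma nat_card_split {α : Type*} [Finite α] (P Q : α → Prop) [DecidablePred Q] :
    Nat.card {x // P x} = Nat.card {x // P x ∧ Q x} + Nat.card {x // P x ∧ ¬ Q x} := by
  rw [Nat.card_congr (splitEquiv P Q), Nat.card_sum]

lemma nat_card_fiber_sum {α : Type*} {ι : Type*} [Finite α] [Fintype ι]
    (P : α → Prop) (g : α → ι) :
    Nat.card {x // P x} = ∑ v : ι, Nat.card {x // P x ∧ g x = v} := by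
  classical
  have e : {x // P x} ≃ Σ v : ι, {x // P x ∧ g x = v} :=
    (Equiv.sigmaFiberEquiv fun y : {x // P x} => g y.1).symm.trans
      (Equiv.sigmaCongrRight fun v => Equiv.subtypeSubtypeEquivSubtypeInter P (fun x => g x = v))
  rw [Nat.card_congr e]
  letI : ∀ v : ι, Fintype {x // P x ∧ g x = v} := fun v => Fintype.ofFinite _
  rw [Nat.card_eq_fintype_card, Fintype.card_sigma]
  simp [Nat.card_eq_fintype_card]

open Function

variable {x0 v : Fin n} {S' : Finset (Fin n)}

lemma good_shrink (hx0 : x0 ∉ S') {f : Fin n → Fin n} (hf : IsGood (insert x0 S') f) :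
    IsGood S' (update f x0 x0) := by
  obtain ⟨h1, h2⟩ := hf
  constructor
  · intro x hx
    rcases eq_or_ne x x0 with rfl | hne
    · simp
    · rw [update_of_ne hne]
      exact h1 x (by simp [hne, hx])
  · intro x hx hfx heq
    have hne : x ≠ x0 := fun hc => hx0 (hc ▸ hx)
    rw [update_of_ne hne] at hfx heq
    have hfx0 : f x ≠ x0 := fun hc => hx0 (hc ▸ hfx)
    rw [update_of_ne hfx0] at heq
    exact h2 x (mem_insert_of_mem hx) (mem_insert_of_mem hfx) heq

lemma good_extend_out (hx0 : x0 ∉ S') (hv : v ∉ insert x0 S') {g : Fin n → Fin n}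
    (hg : IsGood S' g) : IsGood (insert x0 S') (update g x0 v) := by
  obtain ⟨h1, h2⟩ := hg
  constructor
  · intro x hx
    have hne : x ≠ x0 := fun hc => hx (hc ▸ mem_insert_self x0 S')
    rw [update_of_ne hne]
    exact h1 x (fun hc => hx (mem_insert_of_mem hc))
  · intro x hx hfx heq
    rcases eq_or_ne x x0 with rfl | hne
    · rw [update_self] at hfx; exact hv hfx
    · rw [update_of_ne hne] at hfx heq
      rcases eq_or_ne (g x) x0 with hgx | hgx
      · rw [hgx, update_self] at heq
        exact hv (heq ▸ hx)
      · rw [update_of_ne hgx] at heq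
        have hgS : g x ∈ S' := by
          rcases mem_insert.1 hfx with hc | hc
          · exact absurd hc hgx
          · exact hc
        have hxS : x ∈ S' := mem_insert.1 hx |>.resolve_left hne
        exact h2 x hxS hgS heq

lemma good_extend_in (hx0 : x0 ∉ S') (hv : v ∈ S') {g : Fin n → Fin n}
    (hg : IsGood S' g) (hgv : g v ≠ x0) : IsGood (insert x0 S') (update g x0 v) := by
  obtain ⟨h1, h2⟩ := hg
  have hvx0 : v ≠ x0 := fun hc => hx0 (hc ▸ hv)
  constructor
  · intro x hx
    have hne : x ≠ x0 := fun hc => hx (hc ▸ mem_insert_self x0 S')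
    rw [update_of_ne hne]
    exact h1 x (fun hc => hx (mem_insert_of_mem hc))
  · intro x hx hfx heq
    rcases eq_or_ne x x0 with rfl | hne
    · rw [update_self, update_of_ne hvx0] at heq
      exact hgv heq
    · rw [update_of_ne hne] at hfx heq
      have hxS : x ∈ S' := mem_insert.1 hx |>.resolve_left hne
      rcases eq_or_ne (g x) x0 with hgx | hgx
      · rw [hgx, update_self] at heq
        exact hgv (by rw [heq]; exact hgx)
      · rw [update_of_ne hgx] at heq
        have hgS : g x ∈ S' := (mem_insert.1 hfx).resolve_left hgx
        exact h2 x hxS hgS heq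

lemma good_at_x0 {f : Fin n → Fin n} (hf : IsGood (insert x0 S') f)
    (hfv : f x0 = v) (hv : v ∈ S') : f v ≠ x0 := by
  intro hc
  apply hf.2 x0 (mem_insert_self x0 S') (hfv ▸ mem_insert_of_mem hv)
  rw [hfv, hc]

lemma good_erase (hx0 : x0 ∉ S') (hv : v ∈ S') {g : Fin n → Fin n}
    (hg : IsGood S' g) (hgv : g v = x0) : IsGood (S'.erase v) (update g v v) := by
  obtain ⟨h1, h2⟩ := hg
  constructor
  · intro x hx
    rcases eq_or_ne x v with rfl | hne
    · simp
    · rw [update_of_ne hne]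
      exact h1 x (fun hc => hx (mem_erase.2 ⟨hne, hc⟩))
  · intro x hx hfx heq
    have hne : x ≠ v := (mem_erase.1 hx).1
    rw [update_of_ne hne] at hfx heq
    have hgx : g x ≠ v := (mem_erase.1 hfx).1
    rw [update_of_ne hgx] at heq
    exact h2 x (mem_erase.1 hx).2 (mem_erase.1 hfx).2 heq

lemma good_unerase (hx0 : x0 ∉ S') (hv : v ∈ S') {g : Fin n → Fin n}
    (hg : IsGood (S'.erase v) g) : IsGood S' (update g v x0) := by
  obtain ⟨h1, h2⟩ := hg
  constructor
  · intro x hx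
    have hne : x ≠ v := fun hc => hx (hc ▸ hv)
    rw [update_of_ne hne]
    exact h1 x (fun hc => hx (mem_erase.1 hc).2)
  · intro x hx hfx heq
    rcases eq_or_ne x v with rfl | hne
    · rw [update_self] at hfx; exact hx0 hfx
    · rw [update_of_ne hne] at hfx heq
      rcases eq_or_ne (g x) v with hgx | hgx
      · rw [hgx, update_self] at heq
        exact hx0 (heq ▸ hx)
      · rw [update_of_ne hgx] at heq
        exact h2 x (mem_erase.2 ⟨hne, hx⟩) (mem_erase.2 ⟨hgx, hfx⟩) heq

lemma update_self_of_eq {α : Type*} [DecidableEq α] {f : α → α} {a : α} (h : f a = a) :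
    update f a a = f := by
  funext x
  rcases eq_or_ne x a with rfl | hne
  · rw [update_self, h]
  · rw [update_of_ne hne]

lemma fiber_self (hx0 : x0 ∉ S') :
    Nat.card {f : Fin n → Fin n // IsGood (insert x0 S') f ∧ f x0 = x0} = 0 := by
  rw [Nat.card_eq_zero]
  left
  constructor
  rintro ⟨f, hf, hfx⟩
  exact hf.2 x0 (mem_insert_self x0 S') (by rw [hfx]; exact mem_insert_self x0 S')
    (by rw [hfx, hfx])

lemma fiber_out (hx0 : x0 ∉ S') (hv : v ∉ insert x0 S') :
    Nat.card {f : Fin n → Fin n // IsGood (insert x0 S') f ∧ f x0 = v} = cnt n S' := by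
  apply Nat.card_congr
  refine ⟨fun f => ⟨update f.1 x0 x0, good_shrink hx0 f.2.1⟩,
    fun g => ⟨update g.1 x0 v, good_extend_out hx0 hv g.2, update_self _ _ _⟩, ?_, ?_⟩
  · rintro ⟨f, hf, hfx⟩
    ext x
    simp only [update_idem]
    rw [← hfx, update_eq_self]
  · rintro ⟨g, hg⟩
    ext x
    simp only [update_idem]
    rw [update_self_of_eq (hg.1 x0 hx0)]

lemma fiber_in (hx0 : x0 ∉ S') (hv : v ∈ S') :
    Nat.card {f : Fin n → Fin n // IsGood (insert x0 S') f ∧ f x0 = v} =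
      Nat.card {g : Fin n → Fin n // IsGood S' g ∧ g v ≠ x0} := by
  have hvx0 : v ≠ x0 := fun hc => hx0 (hc ▸ hv)
  apply Nat.card_congr
  refine ⟨fun f => ⟨update f.1 x0 x0, good_shrink hx0 f.2.1, ?_⟩,
    fun g => ⟨update g.1 x0 v, good_extend_in hx0 hv g.2.1 g.2.2, update_self _ _ _⟩, ?_, ?_⟩
  · rw [update_of_ne hvx0]
    exact good_at_x0 f.2.1 f.2.2 hv
  · rintro ⟨f, hf, hfx⟩
    ext x
    simp only [update_idem]
    rw [← hfx, update_eq_self]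
  · rintro ⟨g, hg, hgv⟩
    ext x
    simp only [update_idem]
    rw [update_self_of_eq (hg.1 x0 hx0)]

lemma fiber_fix (hx0 : x0 ∉ S') (hv : v ∈ S') :
    Nat.card {g : Fin n → Fin n // IsGood S' g ∧ g v = x0} = cnt n (S'.erase v) := by
  apply Nat.card_congr
  refine ⟨fun g => ⟨update g.1 v v, good_erase hx0 hv g.2.1 g.2.2⟩,
    fun h => ⟨update h.1 v x0, good_unerase hx0 hv h.2, update_self _ _ _⟩, ?_, ?_⟩
  · rintro ⟨g, hg, hgv⟩
    ext x
    simp only [update_idem]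
    rw [← hgv, update_eq_self]
  · rintro ⟨h, hh⟩
    ext x
    simp only [update_idem]
    rw [update_self_of_eq (hh.1 v (fun hc => (mem_erase.1 hc).1 rfl))]

lemma cnt_insert_int (hx0 : x0 ∉ S') :
    (cnt n (insert x0 S') : ℤ) =
      ((n : ℤ) - 1 - S'.card) * cnt n S' +
        ∑ v ∈ S', ((cnt n S' : ℤ) - cnt n (S'.erase v)) := by
  classical
  have hcard : (insert x0 S').card = S'.card + 1 := card_insert_of_notMem hx0
  have hle : S'.card + 1 ≤ n := by
    have := card_le_univ (insert x0 S')
    simpa [hcard] using this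
  have hfib := nat_card_fiber_sum (α := Fin n → Fin n)
    (IsGood (insert x0 S')) (fun f => f x0)
  have key : ∀ v ∈ S',
      (Nat.card {f : Fin n → Fin n // IsGood (insert x0 S') f ∧ f x0 = v} : ℤ) =
        (cnt n S' : ℤ) - cnt n (S'.erase v) := by
    intro v hv
    rw [fiber_in hx0 hv]
    have hsplit := nat_card_split (α := Fin n → Fin n) (IsGood S') (fun g => g v = x0)
    rw [fiber_fix hx0 hv] at hsplit
    have h2 : cnt n S' = cnt n (S'.erase v) +
        Nat.card {g : Fin n → Fin n // IsGood S' g ∧ ¬ g v = x0} := by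
      rw [cnt]; exact hsplit
    rw [h2]; push_cast; ring
  have houtside : ∀ v ∈ (insert x0 S')ᶜ,
      Nat.card {f : Fin n → Fin n // IsGood (insert x0 S') f ∧ f x0 = v} = cnt n S' := by
    intro v hv
    exact fiber_out hx0 (by simpa using hv)
  calc (cnt n (insert x0 S') : ℤ)
      = ∑ v : Fin n,
          (Nat.card {f : Fin n → Fin n // IsGood (insert x0 S') f ∧ f x0 = v} : ℤ) := by
        rw [cnt, hfib]; push_cast; rfl
    _ = ∑ v ∈ (insert x0 S')ᶜ,
          (Nat.card {f : Fin n → Fin n // IsGood (insert x0 S') f ∧ f x0 = v} : ℤ) +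
        ∑ v ∈ insert x0 S',
          (Nat.card {f : Fin n → Fin n // IsGood (insert x0 S') f ∧ f x0 = v} : ℤ) := by
        rw [Finset.sum_compl_add_sum]
    _ = ((n : ℤ) - 1 - S'.card) * cnt n S' +
        ∑ v ∈ S', ((cnt n S' : ℤ) - cnt n (S'.erase v)) := by
        congr 1
        · have hcon : ∀ v ∈ (insert x0 S')ᶜ,
              (Nat.card {f : Fin n → Fin n // IsGood (insert x0 S') f ∧ f x0 = v} : ℤ) =
                (cnt n S' : ℤ) := by
            intro v hv; exact_mod_cast houtside v hv
          rw [Finset.sum_congr rfl hcon, Finset.sum_const,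
            Finset.card_compl, hcard]
          simp only [Fintype.card_fin, nsmul_eq_mul]
          have : ((n - (S'.card + 1) : ℕ) : ℤ) = (n : ℤ) - 1 - S'.card := by
            clear hfib key houtside hcon; omega
          rw [this]
        · rw [Finset.sum_insert hx0, fiber_self hx0]
          push_cast
          rw [Finset.sum_congr rfl key]
          simp

noncomputable def aseq (n k : ℕ) : ℕ :=
  cnt n (Finset.univ.filter fun x : Fin n => (x : ℕ) < k)

lemma initseg_card {k : ℕ} (hk : k ≤ n) :
    (Finset.univ.filter fun x : Fin n => (x : ℕ) < k).card = k := by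
  have : (Finset.univ.filter fun x : Fin n => (x : ℕ) < k) =
      (Finset.univ : Finset (Fin k)).map ⟨Fin.castLE hk, Fin.castLE_injective hk⟩ := by
    ext x
    simp only [mem_filter, mem_univ, true_and, mem_map, Function.Embedding.coeFn_mk]
    constructor
    · intro hx
      exact ⟨⟨x.1, hx⟩, rfl⟩
    · rintro ⟨y, rfl⟩
      exact y.2
  rw [this, Finset.card_map, Finset.card_univ, Fintype.card_fin]

lemma cnt_eq_aseq (S : Finset (Fin n)) : cnt n S = aseq n S.card := by
  apply cnt_card
  rw [initseg_card (by simpa using card_le_univ S)]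

lemma aseq_zero : aseq n 0 = 1 := by
  rw [aseq]
  have : (Finset.univ.filter fun x : Fin n => (x : ℕ) < 0) = ∅ := by simp
  rw [this, cnt_empty]

lemma aseq_succ {k : ℕ} (hk : k + 1 ≤ n) :
    (aseq n (k + 1) : ℤ) = ((n : ℤ) - 1) * aseq n k - k * aseq n (k - 1) := by
  have hkn : k ≤ n := Nat.le_of_succ_le hk
  set x0 : Fin n := ⟨k, hk⟩ with hx0def
  set S' := Finset.univ.filter fun x : Fin n => (x : ℕ) < k with hS'
  have hx0 : x0 ∉ S' := by simp [hS', hx0def]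
  have hS'card : S'.card = k := initseg_card hkn
  have hins : insert x0 S' = Finset.univ.filter fun x : Fin n => (x : ℕ) < k + 1 := by
    ext x
    simp only [mem_insert, hS', mem_filter, mem_univ, true_and, hx0def, Fin.ext_iff]
    omega
  have herase : ∀ v ∈ S', (cnt n (S'.erase v) : ℤ) = (aseq n (k - 1) : ℤ) := by
    intro v hv
    rw [cnt_eq_aseq, card_erase_of_mem hv, hS'card]
  have hS'cnt : cnt n S' = aseq n k := by rw [cnt_eq_aseq, hS'card]
  have h1 := cnt_insert_int hx0
  rw [hins] at h1
  have h2 : ∑ v ∈ S', ((cnt n S' : ℤ) - cnt n (S'.erase v)) =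
      (k : ℤ) * ((aseq n k : ℤ) - aseq n (k - 1)) := by
    rw [Finset.sum_congr rfl (fun v hv => by rw [herase v hv, hS'cnt]),
      Finset.sum_const, hS'card]
    simp
  rw [h2, hS'cnt, hS'card] at h1
  rw [aseq, h1]
  ring


def dd (i : ℕ) : ℕ := (2 * i).factorial / (2 ^ i * i.factorial)

lemma two_mul_factorial (i : ℕ) :
    (2 * i).factorial = 2 ^ i * i.factorial * (2 * i - 1).doubleFactorial := by
  cases i with
  | zero => simp
  | succ j =>
    have h : 2 * (j + 1) = (2 * j + 1) + 1 := by ring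
    rw [h, Nat.factorial_eq_mul_doubleFactorial]
    have h2 : (2 * j + 1 + 1) = 2 * (j + 1) := by ring
    rw [h2, Nat.doubleFactorial_two_mul]
    have h3 : 2 * (j + 1) - 1 = 2 * j + 1 := by omega
    rw [h3]

lemma dd_eq (i : ℕ) : dd i = (2 * i - 1).doubleFactorial := by
  rw [dd, two_mul_factorial]
  exact Nat.mul_div_cancel_left _ (by positivity)

lemma dd_zero : dd 0 = 1 := by simp [dd]

lemma dd_succ (i : ℕ) : dd (i + 1) = (2 * i + 1) * dd i := by
  rw [dd_eq, dd_eq]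
  cases i with
  | zero => simp [Nat.doubleFactorial]
  | succ j =>
    have e1 : 2 * (j + 1 + 1) - 1 = (2 * j + 1) + 2 := by omega
    have e2 : 2 * (j + 1) - 1 = 2 * j + 1 := by omega
    have e3 : 2 * (j + 1) + 1 = (2 * j + 1) + 2 := by omega
    rw [e1, e2, e3, Nat.doubleFactorial_add_two]

lemma dchoose (k i : ℕ) :
    (k + 2).choose (2 * (i + 1)) * dd (i + 1) =
      (k + 1).choose (2 * (i + 1)) * dd (i + 1) + (k + 1) * (k.choose (2 * i) * dd i) := by
  have h1 : 2 * (i + 1) = (2 * i + 1) + 1 := by ring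
  have pascal : (k + 2).choose (2 * (i + 1)) =
      (k + 1).choose (2 * i + 1) + (k + 1).choose (2 * (i + 1)) := by
    rw [h1]
    exact Nat.choose_succ_succ (k + 1) (2 * i + 1)
  rw [pascal, add_mul, add_comm]
  congr 1
  rw [dd_succ]
  have habs := Nat.add_one_mul_choose_eq k (2 * i)
  calc (k + 1).choose (2 * i + 1) * ((2 * i + 1) * dd i)
      = ((k + 1).choose (2 * i + 1) * (2 * i + 1)) * dd i := by ring
    _ = ((k + 1) * k.choose (2 * i)) * dd i := by rw [← habs]
    _ = (k + 1) * (k.choose (2 * i) * dd i) := by ring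

def Jf (n k : ℕ) : ℤ :=
  ∑ i ∈ Finset.range (k / 2 + 1),
    (-1 : ℤ) ^ i * ((n : ℤ) - 1) ^ (k - 2 * i) * (k.choose (2 * i) : ℤ) * (dd i : ℤ)

lemma Jf_ext (n k M : ℕ) (h : k / 2 + 1 ≤ M) :
    Jf n k = ∑ i ∈ Finset.range M,
      (-1 : ℤ) ^ i * ((n : ℤ) - 1) ^ (k - 2 * i) * (k.choose (2 * i) : ℤ) * (dd i : ℤ) := by
  rw [Jf]
  apply Finset.sum_subset (Finset.range_subset_range.2 h)
  intro i _ hi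
  simp only [Finset.mem_range, not_lt] at hi
  have : k.choose (2 * i) = 0 := Nat.choose_eq_zero_of_lt (by omega)
  simp [this]

lemma Jf_zero (n : ℕ) : Jf n 0 = 1 := by simp [Jf, dd_zero]

lemma Jf_one (n : ℕ) : Jf n 1 = (n : ℤ) - 1 := by simp [Jf, dd_zero]

lemma Jf_rec (n k : ℕ) :
    Jf n (k + 2) = ((n : ℤ) - 1) * Jf n (k + 1) - (k + 1) * Jf n k := by
  set t : ℤ := (n : ℤ) - 1 with ht
  have h2 : (k + 2) / 2 + 1 = k / 2 + 2 := by omega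
  have lhs : Jf n (k + 2) = ∑ i ∈ Finset.range (k / 2 + 2),
      (-1 : ℤ) ^ i * t ^ (k + 2 - 2 * i) * ((k + 2).choose (2 * i) : ℤ) * (dd i : ℤ) := by
    rw [Jf, h2]
  have rhs1 : t * Jf n (k + 1) = ∑ i ∈ Finset.range (k / 2 + 2),
      (-1 : ℤ) ^ i * t ^ (k + 2 - 2 * i) * ((k + 1).choose (2 * i) : ℤ) * (dd i : ℤ) := by
    rw [Jf_ext n (k + 1) (k / 2 + 2) (by omega), Finset.mul_sum]
    apply Finset.sum_congr rfl
    intro i hi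
    rcases le_or_gt (2 * i) (k + 1) with hle | hlt
    · have : k + 2 - 2 * i = (k + 1 - 2 * i) + 1 := by omega
      rw [this, pow_succ]
      ring
    · have hz : (k + 1).choose (2 * i) = 0 := Nat.choose_eq_zero_of_lt hlt
      rw [hz]
      push_cast
      ring
  have hterm : ∀ i ∈ Finset.range (k / 2 + 1),
      (-1 : ℤ) ^ (i + 1) * t ^ (k + 2 - 2 * (i + 1)) * ((k + 2).choose (2 * (i + 1)) : ℤ) *
          (dd (i + 1) : ℤ) =
        (-1 : ℤ) ^ (i + 1) * t ^ (k + 2 - 2 * (i + 1)) * ((k + 1).choose (2 * (i + 1)) : ℤ) *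
            (dd (i + 1) : ℤ) -
          (k + 1 : ℤ) * ((-1 : ℤ) ^ i * t ^ (k - 2 * i) * (k.choose (2 * i) : ℤ) * (dd i : ℤ)) := by
    intro i hi
    have hc : (((k + 2).choose (2 * (i + 1)) : ℤ) * (dd (i + 1) : ℤ)) =
        ((k + 1).choose (2 * (i + 1)) : ℤ) * (dd (i + 1) : ℤ) +
          ((k : ℤ) + 1) * ((k.choose (2 * i) : ℤ) * (dd i : ℤ)) := by
      exact_mod_cast congrArg (fun x : ℕ => (x : ℤ)) (dchoose k i)
    have hexp : k + 2 - 2 * (i + 1) = k - 2 * i := by omega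
    rw [hexp]
    have hsgn : (-1 : ℤ) ^ (i + 1) = -(-1 : ℤ) ^ i := by rw [pow_succ]; ring
    rw [hsgn]
    linear_combination (-(-1 : ℤ) ^ i * t ^ (k - 2 * i)) * hc
  have hA : ∑ i ∈ Finset.range (k / 2 + 2),
      (-1 : ℤ) ^ i * t ^ (k + 2 - 2 * i) * ((k + 2).choose (2 * i) : ℤ) * (dd i : ℤ) =
      ∑ i ∈ Finset.range (k / 2 + 1),
        (-1 : ℤ) ^ (i + 1) * t ^ (k + 2 - 2 * (i + 1)) * ((k + 2).choose (2 * (i + 1)) : ℤ) *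
          (dd (i + 1) : ℤ) + t ^ (k + 2) := by
    rw [Finset.sum_range_succ']
    congr 1
    simp [dd_zero]
  have hB : ∑ i ∈ Finset.range (k / 2 + 2),
      (-1 : ℤ) ^ i * t ^ (k + 2 - 2 * i) * ((k + 1).choose (2 * i) : ℤ) * (dd i : ℤ) =
      ∑ i ∈ Finset.range (k / 2 + 1),
        (-1 : ℤ) ^ (i + 1) * t ^ (k + 2 - 2 * (i + 1)) * ((k + 1).choose (2 * (i + 1)) : ℤ) *
          (dd (i + 1) : ℤ) + t ^ (k + 2) := by
    rw [Finset.sum_range_succ']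
    congr 1
    simp [dd_zero]
  have hJk : Jf n k = ∑ i ∈ Finset.range (k / 2 + 1),
      (-1 : ℤ) ^ i * t ^ (k - 2 * i) * (k.choose (2 * i) : ℤ) * (dd i : ℤ) := by
    rw [Jf]
  rw [lhs, hA, Finset.sum_congr rfl hterm, Finset.sum_sub_distrib, ← Finset.mul_sum,
    rhs1, hB, ← hJk]
  ring

section Glue

variable {m n : ℕ} (h : m ≤ n)

def extFun (f : Fin m → Fin n) : Fin n → Fin n :=
  fun x => if hx : (x : ℕ) < m then f ⟨x.1, hx⟩ else x

lemma extFun_pos (f : Fin m → Fin n) (x : Fin n) (hx : (x : ℕ) < m) :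
    extFun f x = f ⟨x.1, hx⟩ := dif_pos hx

lemma extFun_neg (f : Fin m → Fin n) (x : Fin n) (hx : ¬ (x : ℕ) < m) :
    extFun f x = x := dif_neg hx

lemma extFun_castLE (f : Fin m → Fin n) (y : Fin m) :
    extFun (m := m) f (Fin.castLE h y) = f y := by
  rw [extFun_pos f _ y.2]
  exact congrArg f (Fin.ext rfl)

lemma extFun_good {f : Fin m → Fin n} (hf : AntiInvol h f) :
    IsGood (Finset.univ.filter fun x : Fin n => (x : ℕ) < m) (extFun f) := by
  constructor
  · intro x hx
    simp only [mem_filter, mem_univ, true_and, not_lt] at hx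
    exact extFun_neg f x (by omega)
  · intro x hxS hFxS heq
    simp only [mem_filter, mem_univ, true_and] at hxS hFxS
    rw [extFun_pos f x hxS] at hFxS heq
    rw [extFun_pos f _ hFxS] at heq
    apply hf ⟨x.1, hxS⟩ hFxS
    rw [show Fin.castLE h ⟨x.1, hxS⟩ = x from Fin.ext rfl]
    exact heq

lemma restr_anti {F : Fin n → Fin n}
    (hF : IsGood (Finset.univ.filter fun x : Fin n => (x : ℕ) < m) F) :
    AntiInvol h (fun y => F (Fin.castLE h y)) := by
  intro x hx hc
  simp only at hx hc
  have h1 : Fin.castLE h x ∈ Finset.univ.filter fun y : Fin n => (y : ℕ) < m := by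
    simp only [mem_filter, mem_univ, true_and]
    exact x.2
  have h2 : F (Fin.castLE h x) ∈ Finset.univ.filter fun y : Fin n => (y : ℕ) < m := by
    simp only [mem_filter, mem_univ, true_and]
    exact hx
  apply hF.2 _ h1 h2
  rw [show Fin.castLE h ⟨(F (Fin.castLE h x)).val, hx⟩ = F (Fin.castLE h x) from Fin.ext rfl] at hc
  exact hc

lemma card_anti_eq :
    Nat.card {f : Fin m → Fin n // AntiInvol h f} =
      Nat.card {F : Fin n → Fin n //
        IsGood (Finset.univ.filter fun x : Fin n => (x : ℕ) < m) F} := by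
  apply Nat.card_congr
  refine ⟨fun f => ⟨extFun f.1, extFun_good h f.2⟩,
    fun F => ⟨fun y => F.1 (Fin.castLE h y), restr_anti h F.2⟩, ?_, ?_⟩
  · rintro ⟨f, hf⟩
    apply Subtype.ext
    funext y
    exact extFun_castLE h f y
  · rintro ⟨F, hF⟩
    apply Subtype.ext
    funext x
    simp only [extFun]
    split_ifs with hx
    · exact congrArg F (Fin.ext rfl)
    · exact (hF.1 x (by simp only [mem_filter, mem_univ, true_and]; omega)).symm

end Glue


lemma aseq_eq_Jf {n : ℕ} : ∀ m, m ≤ n → (aseq n m : ℤ) = Jf n m := by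
  intro m
  induction m using Nat.strong_induction_on with
  | _ m ih =>
    match m with
    | 0 =>
      intro _
      rw [aseq_zero, Jf_zero]
      norm_num
    | 1 =>
      intro h1
      rw [aseq_succ h1, Jf_one, aseq_zero]
      norm_num
    | (k + 2) =>
      intro h2
      rw [Jf_rec, aseq_succ h2]
      simp only [Nat.add_sub_cancel]
      rw [ih (k + 1) (by omega) (by omega), ih k (by omega) (by omega)]
      push_cast
      ring

/-- The number of anti-involutive functions `Fin m → Fin n` equals
`I(m,n) = ∑_{i=0}^{⌊m/2⌋} (−1)^i (n−1)^{m−2i} C(m,2i) (2i)!/(2^i i!)`. -/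
theorem card_antiInvol (m n : ℕ) (h : m ≤ n) :
    (Nat.card {f : Fin m → Fin n // AntiInvol h f} : ℤ) =
      ∑ i ∈ Finset.range (m / 2 + 1),
        (-1 : ℤ) ^ i * ((n : ℤ) - 1) ^ (m - 2 * i) * (m.choose (2 * i) : ℤ) *
          (((2 * i).factorial / (2 ^ i * i.factorial) : ℕ) : ℤ) := by
  have h1 := card_anti_eq h
  have h2 : Nat.card {F : Fin n → Fin n //
      IsGood (Finset.univ.filter fun x : Fin n => (x : ℕ) < m) F} = aseq n m := rfl
  have h3 := aseq_eq_Jf m h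
  rw [h1, h2, h3, Jf]
  rfl
end

section
/- Let m ≤ n be natural numbers and let i be a natural number with 2i ≤ m. The number of pairs (f, L), where f : Fin m → Fin n is fixed point free and L is a set of exactly i symmetric pairs of f, equals (n−1)^{m−2i} · C(m, 2i) · (2i)!/(2^i · i!). -/
/-- `f : Fin m → Fin n` (with `m ≤ n`, `Fin m` viewed as the initial segment of
`Fin n`) is fixed point free if `f x ≠ x` for every `x`. -/
def FixedPointFree {m n : ℕ} (h : m ≤ n) (f : Fin m → Fin n) : Prop :=
  ∀ x : Fin m, f x ≠ Fin.castLE h x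

/-- A symmetric pair of `f` is a two-element set `{x, f x}` such that `x < m`,
`f x < m`, `f x ≠ x` and `f (f x) = x`. -/
def IsSymmPair {m n : ℕ} (h : m ≤ n) (f : Fin m → Fin n) (e : Finset (Fin n)) : Prop :=
  ∃ (x : Fin m) (hx : (f x).val < m),
    e = {Fin.castLE h x, f x} ∧ f x ≠ Fin.castLE h x ∧ f ⟨(f x).val, hx⟩ = Fin.castLE h x

namespace CardFpf

open Finset

variable {m n i : ℕ}

/-- A "partial matching": `i` pairwise disjoint 2-subsets of the initial segment. -/
def Mpred (h : m ≤ n) (i : ℕ) (L : Finset (Finset (Fin n))) : Prop :=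
  L.card = i ∧ (∀ e ∈ L, ∃ x y : Fin m, x ≠ y ∧ e = {Fin.castLE h x, Fin.castLE h y}) ∧
    ∀ e₁ ∈ L, ∀ e₂ ∈ L, e₁ ≠ e₂ → Disjoint e₁ e₂

lemma unique_mem (h : m ≤ n) {L : Finset (Finset (Fin n))} (hL : Mpred h i L)
    {e e' : Finset (Fin n)} {z : Fin n} (he : e ∈ L) (he' : e' ∈ L)
    (hz : z ∈ e) (hz' : z ∈ e') : e = e' := by
  by_contra hne
  exact (Finset.disjoint_left.mp (hL.2.2 e he e' he' hne) hz) hz'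

/-- the allowed values of `f x` given a matching `L`. -/
noncomputable def T (h : m ≤ n) (L : Finset (Finset (Fin n))) (x : Fin m) : Finset (Fin n) :=
  if (∃ e ∈ L, Fin.castLE h x ∈ e) then
    ((L.filter fun e => Fin.castLE h x ∈ e).biUnion id).erase (Fin.castLE h x)
  else Finset.univ.erase (Fin.castLE h x)

lemma T_of_mem (h : m ≤ n) {L : Finset (Finset (Fin n))} (hL : Mpred h i L)
    {e : Finset (Fin n)} {x : Fin m} (he : e ∈ L) (hx : Fin.castLE h x ∈ e) :
    T h L x = e.erase (Fin.castLE h x) := by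
  rw [T, if_pos ⟨e, he, hx⟩]
  have : (L.filter fun e => Fin.castLE h x ∈ e) = {e} := by
    rw [Finset.eq_singleton_iff_unique_mem]
    refine ⟨Finset.mem_filter.mpr ⟨he, hx⟩, fun e' he' => ?_⟩
    rw [Finset.mem_filter] at he'
    exact unique_mem h hL he'.1 he he'.2 hx
  rw [this, Finset.singleton_biUnion, id]

lemma T_of_not_mem (h : m ≤ n) {L : Finset (Finset (Fin n))} {x : Fin m}
    (hx : ¬ ∃ e ∈ L, Fin.castLE h x ∈ e) :
    T h L x = Finset.univ.erase (Fin.castLE h x) := by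
  rw [T, if_neg hx]

lemma mem_T_ne (h : m ≤ n) {L : Finset (Finset (Fin n))} {x : Fin m} {y : Fin n}
    (hy : y ∈ T h L x) : y ≠ Fin.castLE h x := by
  rw [T] at hy
  split at hy <;> exact (Finset.mem_erase.mp hy).1
section
variable {m n i : ℕ}
open Finset

/-- key equivalence for counting `f` compatible with a fixed matching `L`. -/
lemma Q_iff (h : m ≤ n) {L : Finset (Finset (Fin n))} (hL : Mpred h i L) (f : Fin m → Fin n) :
    (FixedPointFree h f ∧ ∀ e ∈ L, IsSymmPair h f e) ↔ ∀ x : Fin m, f x ∈ T h L x := by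
  constructor
  · rintro ⟨hfpf, hsp⟩ x
    by_cases hx : ∃ e ∈ L, Fin.castLE h x ∈ e
    · obtain ⟨e, he, hxe⟩ := hx
      rw [T_of_mem h hL he hxe, Finset.mem_erase]
      obtain ⟨y, hy, hey, hfy, hffy⟩ := hsp e he
      refine ⟨hfpf x, ?_⟩
      rw [hey] at hxe
      rw [Finset.mem_insert, Finset.mem_singleton] at hxe
      rcases hxe with hxy | hxfy
      · have : x = y := Fin.castLE_injective h hxy
        subst this
        rw [hey]
        simp
      · have hxval : x = ⟨(f y).val, hy⟩ := by
          apply Fin.ext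
          simpa using congrArg Fin.val hxfy
        rw [hxval, hffy, hey]
        simp
    · rw [T_of_not_mem h hx, Finset.mem_erase]
      exact ⟨hfpf x, Finset.mem_univ _⟩
  · intro hT
    constructor
    · exact fun x => mem_T_ne h (hT x)
    · intro e he
      obtain ⟨x, y, hxy, hexy⟩ := hL.2.1 e he
      have hxe : Fin.castLE h x ∈ e := by rw [hexy]; simp
      have hye : Fin.castLE h y ∈ e := by rw [hexy]; simp
      have hcy : Fin.castLE h x ≠ Fin.castLE h y := fun hc => hxy (Fin.castLE_injective h hc)
      have hfx : f x = Fin.castLE h y := by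
        have := hT x
        rw [T_of_mem h hL he hxe, hexy] at this
        have h2 : ({Fin.castLE h x, Fin.castLE h y} : Finset (Fin n)).erase (Fin.castLE h x)
            = {Fin.castLE h y} := by
          rw [Finset.erase_insert (by simpa using hcy)]
        rw [h2, Finset.mem_singleton] at this
        exact this
      have hfy : f y = Fin.castLE h x := by
        have := hT y
        rw [T_of_mem h hL he hye, hexy] at this
        rw [Finset.mem_erase] at this
        rcases Finset.mem_insert.mp this.2 with h1 | h1
        · exact h1
        · exact absurd (Finset.mem_singleton.mp h1) this.1
      have hvx : (f x).val < m := by rw [hfx]; simpa using y.2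
      refine ⟨x, hvx, ?_, ?_, ?_⟩
      · rw [hexy, hfx]
      · rw [hfx]; exact hcy.symm
      · have : (⟨(f x).val, hvx⟩ : Fin m) = y := by
          apply Fin.ext; simp [hfx]
        rw [this, hfy]
end
section
variable {m n i : ℕ}
open Finset

lemma symmPair_shape (h : m ≤ n) {f : Fin m → Fin n} {e : Finset (Fin n)}
    (hs : IsSymmPair h f e) :
    ∃ x y : Fin m, x ≠ y ∧ e = {Fin.castLE h x, Fin.castLE h y} ∧
      f x = Fin.castLE h y ∧ f y = Fin.castLE h x := by
  obtain ⟨x, hx, hexy, hne, hff⟩ := hs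
  refine ⟨x, ⟨(f x).val, hx⟩, ?_, ?_, ?_, hff⟩
  · intro hc
    apply hne
    apply Fin.ext
    simpa using (congrArg Fin.val hc).symm
  · rw [hexy]
    congr 1
  · apply Fin.ext; simp

lemma mpred_of_symmPairs (h : m ≤ n) {f : Fin m → Fin n} {L : Finset (Finset (Fin n))}
    (hc : L.card = i) (hsp : ∀ e ∈ L, IsSymmPair h f e) : Mpred h i L := by
  refine ⟨hc, ?_, ?_⟩
  · intro e he
    obtain ⟨x, y, hxy, hexy, _, _⟩ := symmPair_shape h (hsp e he)
    exact ⟨x, y, hxy, hexy⟩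
  · intro e₁ he₁ e₂ he₂ hne
    obtain ⟨x, y, hxy, he1, hfx, hfy⟩ := symmPair_shape h (hsp e₁ he₁)
    obtain ⟨a, b, hab, he2, hfa, hfb⟩ := symmPair_shape h (hsp e₂ he₂)
    rw [Finset.disjoint_left]
    intro z hz1 hz2
    apply hne
    rw [he1, he2] at *
    have hz1' := Finset.mem_insert.mp hz1
    have hz2' := Finset.mem_insert.mp hz2
    simp only [Finset.mem_singleton] at hz1' hz2'
    have key : ∀ u v : Fin m, f u = Fin.castLE h v → f v = Fin.castLE h u →
        ∀ w t : Fin m, f w = Fin.castLE h t → f t = Fin.castLE h w →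
        Fin.castLE h u = Fin.castLE h w ∨ Fin.castLE h u = Fin.castLE h t →
        ({Fin.castLE h u, Fin.castLE h v} : Finset (Fin n)) = {Fin.castLE h w, Fin.castLE h t} := by
      intro u v huv hvu w t hwt htw hcase
      rcases hcase with hc | hc
      · have : u = w := Fin.castLE_injective h hc
        subst this
        have : t = v := Fin.castLE_injective h (by rw [← huv, ← hwt])
        subst this
        rfl
      · have : u = t := Fin.castLE_injective h hc
        subst this
        have : v = w := Fin.castLE_injective h (by rw [← huv, ← htw])
        subst this
        rw [Finset.pair_comm]
    rcases hz1' with rfl | rfl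
    · exact key x y hfx hfy a b hfa hfb (by tauto)
    · rcases hz2' with hc | hc
      · exact (Finset.pair_comm _ _).trans (key y x hfy hfx a b hfa hfb (Or.inl hc))
      · exact (Finset.pair_comm _ _).trans (key y x hfy hfx a b hfa hfb (Or.inr hc))
end
section
variable {m n i : ℕ}
open Finset

lemma card_T_of_mem (h : m ≤ n) {L : Finset (Finset (Fin n))} (hL : Mpred h i L)
    {x : Fin m} (hx : ∃ e ∈ L, Fin.castLE h x ∈ e) : (T h L x).card = 1 := by
  obtain ⟨e, he, hxe⟩ := hx
  rw [T_of_mem h hL he hxe]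
  obtain ⟨a, b, hab, heab⟩ := hL.2.1 e he
  have hcard : e.card = 2 := by
    rw [heab]
    rw [Finset.card_insert_of_notMem (by
      simp only [Finset.mem_singleton]
      exact fun hc => hab (Fin.castLE_injective h hc))]
    simp
  rw [Finset.card_erase_of_mem hxe, hcard]

lemma card_T_of_not_mem (h : m ≤ n) {L : Finset (Finset (Fin n))} {x : Fin m}
    (hx : ¬ ∃ e ∈ L, Fin.castLE h x ∈ e) : (T h L x).card = n - 1 := by
  rw [T_of_not_mem h hx, Finset.card_erase_of_mem (Finset.mem_univ _), Finset.card_univ,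
    Fintype.card_fin]

lemma card_support (h : m ≤ n) {L : Finset (Finset (Fin n))} (hL : Mpred h i L) :
    (L.biUnion id).card = 2 * i := by
  change (L.biUnion fun e => e).card = 2 * i
  rw [Finset.card_biUnion (fun e he e' he' hne => hL.2.2 e he e' he' hne)]
  rw [Finset.sum_congr rfl (g := fun _ => 2) ?_, Finset.sum_const, hL.1, smul_eq_mul, mul_comm]
  intro e he
  obtain ⟨a, b, hab, heab⟩ := hL.2.1 e he
  rw [heab]
  rw [Finset.card_insert_of_notMem (by
    simp only [Finset.mem_singleton]
    exact fun hc => hab (Fin.castLE_injective h hc))]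
  simp

lemma card_filter_pred (h : m ≤ n) {L : Finset (Finset (Fin n))} (hL : Mpred h i L) :
    ((Finset.univ : Finset (Fin m)).filter fun x => ∃ e ∈ L, Fin.castLE h x ∈ e).card = 2 * i := by
  rw [← card_support h hL]
  apply Finset.card_bij (fun x _ => Fin.castLE h x)
  · intro a ha
    rw [Finset.mem_filter] at ha
    obtain ⟨e, he, hae⟩ := ha.2
    exact Finset.mem_biUnion.mpr ⟨e, he, hae⟩
  · intro a _ b _ hab
    exact Fin.castLE_injective h hab
  · intro z hz
    obtain ⟨e, he, hze⟩ := Finset.mem_biUnion.mp hz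
    obtain ⟨a, b, hab, heab⟩ := hL.2.1 e he
    simp only [heab, id, Finset.mem_insert, Finset.mem_singleton] at hze
    rcases hze with rfl | rfl
    · exact ⟨a, Finset.mem_filter.mpr ⟨Finset.mem_univ _, e, he, heab ▸ (by simp)⟩, rfl⟩
    · exact ⟨b, Finset.mem_filter.mpr ⟨Finset.mem_univ _, e, he, heab ▸ (by simp)⟩, rfl⟩

lemma prod_card_T (h : m ≤ n) {L : Finset (Finset (Fin n))} (hL : Mpred h i L)
    (hi : 2 * i ≤ m) :
    ∏ x : Fin m, (T h L x).card = (n - 1) ^ (m - 2 * i) := by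
  classical
  rw [← Finset.prod_filter_mul_prod_filter_not Finset.univ
    (fun x => ∃ e ∈ L, Fin.castLE h x ∈ e)]
  rw [Finset.prod_congr rfl (g := fun _ => 1)
      (fun x hx => card_T_of_mem h hL (Finset.mem_filter.mp hx).2),
    Finset.prod_congr rfl (g := fun _ => n - 1)
      (fun x hx => card_T_of_not_mem h (Finset.mem_filter.mp hx).2)]
  rw [Finset.prod_const, Finset.prod_const, one_pow, one_mul]
  congr 1
  have htot := Finset.card_filter_add_card_filter_not
    (s := (Finset.univ : Finset (Fin m))) (fun x => ∃ e ∈ L, Fin.castLE h x ∈ e)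
  rw [card_filter_pred h hL, Finset.card_univ, Fintype.card_fin] at htot
  omega
end
section
open scoped Classical
variable {m n i : ℕ}
open Finset

lemma card_compat (h : m ≤ n) {L : Finset (Finset (Fin n))} (hL : Mpred h i L)
    (hi : 2 * i ≤ m) :
    ((Finset.univ : Finset (Fin m → Fin n)).filter fun f => ∀ x, f x ∈ T h L x).card
      = (n - 1) ^ (m - 2 * i) := by
  classical
  rw [← Fintype.card_subtype]
  rw [Fintype.card_congr (Equiv.subtypePiEquivPi (p := fun x y => y ∈ T h L x))]
  rw [Fintype.card_pi]
  rw [← prod_card_T h hL hi]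
  exact Finset.prod_congr rfl fun x _ => Fintype.card_coe _

lemma step_A (h : m ≤ n) (hi : 2 * i ≤ m) :
    Nat.card {p : (Fin m → Fin n) × Finset (Finset (Fin n)) //
        FixedPointFree h p.1 ∧ p.2.card = i ∧ ∀ e ∈ p.2, IsSymmPair h p.1 e} =
      ((Finset.univ.filter (Mpred h i)).card) * (n - 1) ^ (m - 2 * i) := by
  classical
  rw [Nat.card_eq_fintype_card, Fintype.card_subtype]
  rw [Finset.card_eq_sum_card_fiberwise (f := Prod.snd)
    (t := Finset.univ.filter (Mpred h i))
    (fun p hp => by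
      rw [Finset.mem_coe, Finset.mem_filter] at hp
      exact Finset.mem_filter.mpr ⟨Finset.mem_univ _, mpred_of_symmPairs h hp.2.2.1 hp.2.2.2⟩)]
  rw [Finset.sum_congr rfl (g := fun _ => (n - 1) ^ (m - 2 * i)) ?_, Finset.sum_const,
    smul_eq_mul]
  intro L hLmem
  have hL : Mpred h i L := (Finset.mem_filter.mp hLmem).2
  rw [← card_compat h hL hi]
  refine Finset.card_bij' (fun p _ => p.1) (fun f _ => (f, L)) ?_ ?_ ?_ ?_
  case _ =>
    intro p hp
    simp only [Finset.mem_filter] at hp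
    obtain ⟨⟨_, hfpf, _, hsp⟩, hL2⟩ := hp
    subst hL2
    exact Finset.mem_filter.mpr ⟨Finset.mem_univ _, (Q_iff h hL p.1).mp ⟨hfpf, hsp⟩⟩
  case _ =>
    intro f hf
    rw [Finset.mem_filter] at hf
    have := (Q_iff h hL f).mpr hf.2
    exact Finset.mem_filter.mpr ⟨Finset.mem_filter.mpr
      ⟨Finset.mem_univ _, this.1, hL.1, this.2⟩, rfl⟩
  case _ =>
    intro p hp
    simp only [Finset.mem_filter] at hp
    exact Prod.ext rfl hp.2.symm
  case _ =>
    intro f _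
    rfl
end
section
open scoped Classical
open Finset
variable {m n i : ℕ}

def pairIdx0 (j : Fin i) : Fin (2 * i) := ⟨2 * j.1, by have := j.2; omega⟩
def pairIdx1 (j : Fin i) : Fin (2 * i) := ⟨2 * j.1 + 1, by have := j.2; omega⟩

def pairOf (h : m ≤ n) (e : Fin (2 * i) ↪ Fin m) (j : Fin i) : Finset (Fin n) :=
  {Fin.castLE h (e (pairIdx0 j)), Fin.castLE h (e (pairIdx1 j))}

def Phi (h : m ≤ n) (e : Fin (2 * i) ↪ Fin m) : Finset (Finset (Fin n)) :=
  Finset.univ.image (pairOf h e)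

lemma pairIdx_ne {j j' : Fin i} : pairIdx0 j ≠ pairIdx1 j' := by
  intro hc
  have := congrArg Fin.val hc
  simp only [pairIdx0, pairIdx1] at this
  omega

lemma mem_pairOf (h : m ≤ n) {e : Fin (2 * i) ↪ Fin m} {j : Fin i} {z : Fin n}
    (hz : z ∈ pairOf h e j) :
    z = Fin.castLE h (e (pairIdx0 j)) ∨ z = Fin.castLE h (e (pairIdx1 j)) := by
  simpa [pairOf] using hz

lemma pairOf_disjoint (h : m ≤ n) (e : Fin (2 * i) ↪ Fin m) {j j' : Fin i} (hjj : j ≠ j') :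
    Disjoint (pairOf h e j) (pairOf h e j') := by
  rw [Finset.disjoint_left]
  intro z hz hz'
  have hidx : ∀ a b : Fin (2 * i), Fin.castLE h (e a) = Fin.castLE h (e b) → a = b :=
    fun a b hab => e.injective (Fin.castLE_injective h hab)
  rcases mem_pairOf h hz with rfl | rfl <;> rcases mem_pairOf h hz' with hc | hc
  · refine hjj (Fin.ext ?_)
    have := congrArg Fin.val (hidx _ _ hc)
    simp only [pairIdx0] at this
    omega
  · exact absurd (hidx _ _ hc) pairIdx_ne
  · exact absurd (hidx _ _ hc).symm pairIdx_ne
  · refine hjj (Fin.ext ?_)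
    have := congrArg Fin.val (hidx _ _ hc)
    simp only [pairIdx1] at this
    omega

lemma pairOf_injective (h : m ≤ n) (e : Fin (2 * i) ↪ Fin m) :
    Function.Injective (pairOf h e) := by
  intro j j' hjj
  by_contra hne
  have hd := pairOf_disjoint h e hne
  rw [hjj, disjoint_self] at hd
  have : Fin.castLE h (e (pairIdx0 j')) ∈ pairOf h e j' := by simp [pairOf]
  rw [hd] at this
  simp at this

lemma Phi_mpred (h : m ≤ n) (e : Fin (2 * i) ↪ Fin m) : Mpred h i (Phi h e) := by
  refine ⟨?_, ?_, ?_⟩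
  · rw [Phi, Finset.card_image_of_injective _ (pairOf_injective h e), Finset.card_univ,
      Fintype.card_fin]
  · intro t ht
    obtain ⟨j, _, rfl⟩ := Finset.mem_image.mp ht
    exact ⟨e (pairIdx0 j), e (pairIdx1 j),
      fun hc => pairIdx_ne (e.injective hc), rfl⟩
  · intro t₁ ht₁ t₂ ht₂ hne
    obtain ⟨j₁, _, rfl⟩ := Finset.mem_image.mp ht₁
    obtain ⟨j₂, _, rfl⟩ := Finset.mem_image.mp ht₂
    exact pairOf_disjoint h e (fun hc => hne (by rw [hc]))

/-- interleave two sequences -/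
def buildEmbFun (a b : Fin i → Fin m) : Fin (2 * i) → Fin m :=
  fun k =>
    if k.1 % 2 = 0 then a ⟨k.1 / 2, by have := k.2; omega⟩
    else b ⟨k.1 / 2, by have := k.2; omega⟩

lemma buildEmb_idx0 (a b : Fin i → Fin m) (j : Fin i) :
    buildEmbFun a b (pairIdx0 j) = a j := by
  have h0 : (pairIdx0 j).1 % 2 = 0 := by simp only [pairIdx0]; omega
  rw [buildEmbFun, if_pos h0]
  congr 1
  exact Fin.ext (by simp only [pairIdx0]; omega)

lemma buildEmb_idx1 (a b : Fin i → Fin m) (j : Fin i) :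
    buildEmbFun a b (pairIdx1 j) = b j := by
  have h0 : ¬ (pairIdx1 j).1 % 2 = 0 := by simp only [pairIdx1]; omega
  rw [buildEmbFun, if_neg h0]
  congr 1
  exact Fin.ext (by simp only [pairIdx1]; omega)

lemma buildEmb_inj (a b : Fin i → Fin m)
    (hab : ∀ j, a j ≠ b j)
    (hdisj : ∀ j j', j ≠ j' → a j ≠ a j' ∧ a j ≠ b j' ∧ b j ≠ a j' ∧ b j ≠ b j') :
    Function.Injective (buildEmbFun a b) := by
  intro k k' hkk
  set j : Fin i := ⟨k.1 / 2, by have := k.2; omega⟩ with hj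
  set j' : Fin i := ⟨k'.1 / 2, by have := k'.2; omega⟩ with hj'
  by_cases hjeq : j = j'
  · by_cases hk : k.1 % 2 = 0 <;> by_cases hk' : k'.1 % 2 = 0
    · exact Fin.ext (by have h1 : j.1 = j'.1 := congrArg Fin.val hjeq; simp [hj, hj'] at h1; omega)
    · rw [buildEmbFun, if_pos hk] at hkk
      conv at hkk => rw [buildEmbFun]
      rw [if_neg hk'] at hkk
      rw [← hj, ← hj', ← hjeq] at hkk
      exact absurd hkk (hab j)
    · rw [buildEmbFun, if_neg hk] at hkk
      conv at hkk => rw [buildEmbFun]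
      rw [if_pos hk'] at hkk
      rw [← hj, ← hj', ← hjeq] at hkk
      exact absurd hkk.symm (hab j)
    · exact Fin.ext (by have h1 : j.1 = j'.1 := congrArg Fin.val hjeq; simp [hj, hj'] at h1; omega)
  · exfalso
    have := hdisj j j' hjeq
    rw [buildEmbFun] at hkk
    conv at hkk => rw [buildEmbFun]
    rw [← hj, ← hj'] at hkk
    by_cases hk : k.1 % 2 = 0 <;> by_cases hk' : k'.1 % 2 = 0 <;>
      simp only [hk, hk', if_pos, if_neg, if_true, if_false] at hkk <;> tauto
end
section
open scoped Classical
open Finset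
variable {m n i : ℕ}

lemma pair_min_max {t : Finset (Fin n)} (ht : t.card = 2) (hne : t.Nonempty) :
    ({t.min' hne, t.max' hne} : Finset (Fin n)) = t := by
  have hlt : t.min' hne < t.max' hne := Finset.min'_lt_max'_of_card t (by omega)
  have hsub : ({t.min' hne, t.max' hne} : Finset (Fin n)) ⊆ t := by
    intro z hz
    rcases Finset.mem_insert.mp hz with rfl | hz
    · exact Finset.min'_mem _ _
    · rw [Finset.mem_singleton] at hz; subst hz; exact Finset.max'_mem _ _
  have hcard : ({t.min' hne, t.max' hne} : Finset (Fin n)).card = 2 := by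
    rw [Finset.card_insert_of_notMem
      (by rw [Finset.mem_singleton]; exact ne_of_lt hlt), Finset.card_singleton]
  exact Finset.eq_of_subset_of_card_le hsub (by omega)

lemma fiber_card (h : m ≤ n) {L : Finset (Finset (Fin n))} (hL : Mpred h i L) :
    Fintype.card {e : Fin (2 * i) ↪ Fin m // Phi h e = L} = 2 ^ i * i.factorial := by
  classical
  have hlt : ∀ t ∈ L, ∀ a ∈ t, a.val < m := by
    intro t ht a ha
    obtain ⟨x, y, hxy, rfl⟩ := hL.2.1 t ht
    rcases Finset.mem_insert.mp ha with rfl | ha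
    · exact x.2
    · rw [Finset.mem_singleton] at ha; subst ha; exact y.2
  have hcard2 : ∀ t ∈ L, t.card = 2 := by
    intro t ht
    obtain ⟨x, y, hxy, rfl⟩ := hL.2.1 t ht
    rw [Finset.card_insert_of_notMem (by
        rw [Finset.mem_singleton]
        exact fun hc => hxy (Fin.castLE_injective h hc)), Finset.card_singleton]
  have hnon : ∀ t ∈ L, t.Nonempty := fun t ht => Finset.card_pos.mp (by rw [hcard2 t ht]; omega)
  set lo : ↥L → Fin n := fun t => t.1.min' (hnon t.1 t.2) with hlo
  set hiE : ↥L → Fin n := fun t => t.1.max' (hnon t.1 t.2) with hhiE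
  have hlomem : ∀ t : ↥L, lo t ∈ t.1 := fun t => Finset.min'_mem _ _
  have hhimem : ∀ t : ↥L, hiE t ∈ t.1 := fun t => Finset.max'_mem _ _
  have hlohine : ∀ t : ↥L, lo t ≠ hiE t := fun t =>
    ne_of_lt (Finset.min'_lt_max'_of_card _ (by rw [hcard2 t.1 t.2]; omega))
  have hpairmm : ∀ t : ↥L, ({lo t, hiE t} : Finset (Fin n)) = t.1 := fun t =>
    pair_min_max (hcard2 t.1 t.2) (hnon t.1 t.2)
  set loM : ↥L → Fin m := fun t => ⟨(lo t).val, hlt t.1 t.2 _ (hlomem t)⟩ with hloM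
  set hiM : ↥L → Fin m := fun t => ⟨(hiE t).val, hlt t.1 t.2 _ (hhimem t)⟩ with hhiM
  have hcastlo : ∀ t : ↥L, Fin.castLE h (loM t) = lo t := fun t => Fin.ext rfl
  have hcasthi : ∀ t : ↥L, Fin.castLE h (hiM t) = hiE t := fun t => Fin.ext rfl
  have hloMhiM : ∀ t : ↥L, loM t ≠ hiM t := fun t hc =>
    hlohine t (by rw [← hcastlo, ← hcasthi, hc])
  have hdisjL : ∀ t t' : ↥L, t ≠ t' → Disjoint t.1 t'.1 := fun t t' htt =>
    hL.2.2 t.1 t.2 t'.1 t'.2 (fun hc => htt (Subtype.ext hc))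
  set A : (Fin i → Bool) → (Fin i ≃ ↥L) → Fin i → Fin m :=
    fun o σ j => if o j then hiM (σ j) else loM (σ j) with hA
  set B : (Fin i → Bool) → (Fin i ≃ ↥L) → Fin i → Fin m :=
    fun o σ j => if o j then loM (σ j) else hiM (σ j) with hB
  have hmemA : ∀ o σ j, Fin.castLE h (A o σ j) ∈ (σ j).1 := by
    intro o σ j
    simp only [hA]
    split
    · rw [hcasthi]; exact hhimem _
    · rw [hcastlo]; exact hlomem _
  have hmemB : ∀ o σ j, Fin.castLE h (B o σ j) ∈ (σ j).1 := by
    intro o σ j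
    simp only [hB]
    split
    · rw [hcastlo]; exact hlomem _
    · rw [hcasthi]; exact hhimem _
  have hABne : ∀ o σ j, A o σ j ≠ B o σ j := by
    intro o σ j
    simp only [hA, hB]
    split
    · exact fun hc => hloMhiM _ hc.symm
    · exact hloMhiM _
  have hABpair : ∀ o σ j,
      ({Fin.castLE h (A o σ j), Fin.castLE h (B o σ j)} : Finset (Fin n)) = (σ j).1 := by
    intro o σ j
    simp only [hA, hB]
    split
    · rw [hcasthi, hcastlo, Finset.pair_comm, hpairmm]
    · rw [hcastlo, hcasthi, hpairmm]
  have hdiff : ∀ o σ, ∀ j j' : Fin i, j ≠ j' →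
      A o σ j ≠ A o σ j' ∧ A o σ j ≠ B o σ j' ∧ B o σ j ≠ A o σ j' ∧ B o σ j ≠ B o σ j' := by
    intro o σ j j' hjj
    have hσ : σ j ≠ σ j' := fun hc => hjj (σ.injective hc)
    have hd := hdisjL _ _ hσ
    have key : ∀ u v : Fin m, Fin.castLE h u ∈ (σ j).1 → Fin.castLE h v ∈ (σ j').1 → u ≠ v := by
      intro u v hu hv hc
      subst hc
      exact Finset.disjoint_left.mp hd hu hv
    exact ⟨key _ _ (hmemA o σ j) (hmemA o σ j'), key _ _ (hmemA o σ j) (hmemB o σ j'),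
      key _ _ (hmemB o σ j) (hmemA o σ j'), key _ _ (hmemB o σ j) (hmemB o σ j')⟩
  have hinj : ∀ o σ, Function.Injective (buildEmbFun (A o σ) (B o σ)) :=
    fun o σ => buildEmb_inj _ _ (hABne o σ) (hdiff o σ)
  have hpo : ∀ o σ j, pairOf h ⟨buildEmbFun (A o σ) (B o σ), hinj o σ⟩ j = (σ j).1 := by
    intro o σ j
    rw [pairOf]
    simp only [Function.Embedding.coeFn_mk, buildEmb_idx0, buildEmb_idx1]
    exact hABpair o σ j
  have hPhi : ∀ o σ, Phi h ⟨buildEmbFun (A o σ) (B o σ), hinj o σ⟩ = L := by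
    intro o σ
    rw [Phi]
    ext z
    simp only [Finset.mem_image, Finset.mem_univ, true_and]
    constructor
    · rintro ⟨j, rfl⟩
      rw [hpo]
      exact (σ j).2
    · intro hz
      exact ⟨σ.symm ⟨z, hz⟩, by rw [hpo, Equiv.apply_symm_apply]⟩
  set Ψ : ((Fin i → Bool) × (Fin i ≃ ↥L)) → {e : Fin (2 * i) ↪ Fin m // Phi h e = L} :=
    fun p => ⟨⟨buildEmbFun (A p.1 p.2) (B p.1 p.2), hinj p.1 p.2⟩, hPhi p.1 p.2⟩ with hΨ
  have hbij : Function.Bijective Ψ := by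
    constructor
    · rintro ⟨o, σ⟩ ⟨o', σ'⟩ hpp
      have hfun : ∀ k, buildEmbFun (A o σ) (B o σ) k = buildEmbFun (A o' σ') (B o' σ') k := by
        intro k
        have h1 := congrArg (fun q : {e : Fin (2 * i) ↪ Fin m // Phi h e = L} =>
          (q.1 : Fin (2 * i) → Fin m) k) hpp
        simpa [hΨ] using h1
      have hAk : ∀ j, A o σ j = A o' σ' j := fun j => by
        have := hfun (pairIdx0 j); rwa [buildEmb_idx0, buildEmb_idx0] at this
      have hBk : ∀ j, B o σ j = B o' σ' j := fun j => by
        have := hfun (pairIdx1 j); rwa [buildEmb_idx1, buildEmb_idx1] at this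
      have hσeq : σ = σ' := by
        apply Equiv.ext
        intro j
        refine Subtype.ext ?_
        rw [← hABpair o σ j, ← hABpair o' σ' j, hAk, hBk]
      subst hσeq
      have hoeq : o = o' := by
        funext j
        cases hoj : o j <;> cases hoj' : o' j
        · rfl
        · exfalso
          have hAj := hAk j
          simp [hA, hoj, hoj'] at hAj
          exact hloMhiM _ hAj
        · exfalso
          have hAj := hAk j
          simp [hA, hoj, hoj'] at hAj
          exact hloMhiM _ hAj.symm
        · rfl
      rw [hoeq]
    · rintro ⟨e, hPhie⟩
      have hmempair : ∀ j, pairOf h e j ∈ L := fun j =>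
        hPhie ▸ Finset.mem_image_of_mem _ (Finset.mem_univ j)
      set σ₀ : Fin i → ↥L := fun j => ⟨pairOf h e j, hmempair j⟩ with hσ₀
      have hσinj : Function.Injective σ₀ := fun j j' hjj =>
        pairOf_injective h e (congrArg Subtype.val hjj)
      have hσbij : Function.Bijective σ₀ :=
        (Fintype.bijective_iff_injective_and_card σ₀).mpr
          ⟨hσinj, by rw [Fintype.card_fin, Fintype.card_coe, hL.1]⟩
      set σ : Fin i ≃ ↥L := Equiv.ofBijective σ₀ hσbij with hσdef
      set o : Fin i → Bool := fun j => decide (Fin.castLE h (e (pairIdx0 j)) = hiE (σ₀ j)) with ho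
      refine ⟨(o, σ), ?_⟩
      apply Subtype.ext
      apply Function.Embedding.ext
      intro k
      set j : Fin i := ⟨k.1 / 2, by have := k.2; omega⟩ with hjdef
      have hσj : σ j = σ₀ j := rfl
      have hPmem : Fin.castLE h (e (pairIdx0 j)) ∈ (σ₀ j).1 := by
        simp only [hσ₀, pairOf]
        exact Finset.mem_insert_self _ _
      have hQmem : Fin.castLE h (e (pairIdx1 j)) ∈ (σ₀ j).1 := by
        simp only [hσ₀, pairOf]
        exact Finset.mem_insert_of_mem (Finset.mem_singleton_self _)
      have hPQ : Fin.castLE h (e (pairIdx0 j)) ≠ Fin.castLE h (e (pairIdx1 j)) :=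
        fun hc => pairIdx_ne (e.injective (Fin.castLE_injective h hc))
      have hsplit : ∀ z : Fin n, z ∈ (σ₀ j).1 → z = lo (σ₀ j) ∨ z = hiE (σ₀ j) := by
        intro z hz
        rw [← hpairmm (σ₀ j)] at hz
        rcases Finset.mem_insert.mp hz with hz | hz
        · exact Or.inl hz
        · exact Or.inr (Finset.mem_singleton.mp hz)
      by_cases hk : k.1 % 2 = 0
      · have hk0 : k = pairIdx0 j := Fin.ext (by simp only [pairIdx0, hjdef]; omega)
        rw [hk0]
        show buildEmbFun (A o σ) (B o σ) (pairIdx0 j) = e (pairIdx0 j)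
        rw [buildEmb_idx0]
        by_cases hP : Fin.castLE h (e (pairIdx0 j)) = hiE (σ₀ j)
        · have hoj : o j = true := by simp [ho, hP]
          simp only [hA, hoj, if_true, hσj]
          exact Fin.ext (by rw [hhiM]; simp only; rw [← hP]; rfl)
        · have hoj : o j = false := by simp [ho, hP]
          simp only [hA, hoj, Bool.false_eq_true, if_false, hσj]
          have hPlo : Fin.castLE h (e (pairIdx0 j)) = lo (σ₀ j) :=
            (hsplit _ hPmem).resolve_right hP
          exact Fin.ext (by rw [hloM]; simp only; rw [← hPlo]; rfl)
      · have hk1 : k = pairIdx1 j := Fin.ext (by simp only [pairIdx1, hjdef]; omega)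
        rw [hk1]
        show buildEmbFun (A o σ) (B o σ) (pairIdx1 j) = e (pairIdx1 j)
        rw [buildEmb_idx1]
        by_cases hP : Fin.castLE h (e (pairIdx0 j)) = hiE (σ₀ j)
        · have hoj : o j = true := by simp [ho, hP]
          simp only [hB, hoj, if_true, hσj]
          have hQlo : Fin.castLE h (e (pairIdx1 j)) = lo (σ₀ j) :=
            (hsplit _ hQmem).resolve_right (fun hc => hPQ (by rw [hP, hc]))
          exact Fin.ext (by rw [hloM]; simp only; rw [← hQlo]; rfl)
        · have hoj : o j = false := by simp [ho, hP]
          simp only [hB, hoj, Bool.false_eq_true, if_false, hσj]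
          have hPlo : Fin.castLE h (e (pairIdx0 j)) = lo (σ₀ j) :=
            (hsplit _ hPmem).resolve_right hP
          have hQhi : Fin.castLE h (e (pairIdx1 j)) = hiE (σ₀ j) :=
            (hsplit _ hQmem).resolve_left (fun hc => hPQ (by rw [hPlo, hc]))
          exact Fin.ext (by rw [hhiM]; simp only; rw [← hQhi]; rfl)
  rw [← Fintype.card_of_bijective hbij, Fintype.card_prod, Fintype.card_fun,
    Fintype.card_fin, Fintype.card_bool]
  congr 1
  have hLequiv : Nonempty (Fin i ≃ ↥L) :=
    ⟨Fintype.equivOfCardEq (by rw [Fintype.card_fin, Fintype.card_coe, hL.1])⟩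
  rw [Fintype.card_equiv hLequiv.some, Fintype.card_fin]
end
section
open scoped Classical
open Finset
variable {m n i : ℕ}

lemma step_B (h : m ≤ n) :
    (Finset.univ.filter (Mpred h i)).card * (2 ^ i * i.factorial)
      = m.descFactorial (2 * i) := by
  have hemb : (Finset.univ : Finset (Fin (2 * i) ↪ Fin m)).card = m.descFactorial (2 * i) := by
    rw [Finset.card_univ, Fintype.card_embedding_eq, Fintype.card_fin, Fintype.card_fin]
  rw [← hemb]
  rw [Finset.card_eq_sum_card_fiberwise (f := Phi h) (t := Finset.univ.filter (Mpred h i))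
    (fun e _ => Finset.mem_filter.mpr ⟨Finset.mem_univ _, Phi_mpred h e⟩)]
  rw [Finset.sum_congr rfl (g := fun _ => 2 ^ i * i.factorial) ?_, Finset.sum_const, smul_eq_mul]
  intro L hLmem
  have hL : Mpred h i L := (Finset.mem_filter.mp hLmem).2
  rw [← Fintype.card_subtype]
  exact fiber_card h hL

lemma pow_fact_dvd (i : ℕ) : 2 ^ i * i.factorial ∣ (2 * i).factorial := by
  induction i with
  | zero => simp
  | succ k ih =>
    have h2 : (2 * (k + 1)).factorial = (2 * k + 1 + 1) * ((2 * k + 1) * (2 * k).factorial) := by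
      rw [show 2 * (k + 1) = 2 * k + 1 + 1 by ring, Nat.factorial_succ, Nat.factorial_succ]
    have h1 : 2 ^ (k + 1) * (k + 1).factorial = (2 * k + 1 + 1) * (2 ^ k * k.factorial) := by
      rw [Nat.factorial_succ, pow_succ]; ring
    rw [h1, h2]
    exact Nat.mul_dvd_mul_left _ (ih.trans (dvd_mul_left _ _))

lemma final (h : m ≤ n) (hi : 2 * i ≤ m) :
    Nat.card {p : (Fin m → Fin n) × Finset (Finset (Fin n)) //
        FixedPointFree h p.1 ∧ p.2.card = i ∧ ∀ e ∈ p.2, IsSymmPair h p.1 e} =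
      (n - 1) ^ (m - 2 * i) * m.choose (2 * i) *
        ((2 * i).factorial / (2 ^ i * i.factorial)) := by
  rw [step_A h hi]
  have hpos : 0 < 2 ^ i * i.factorial :=
    Nat.mul_pos (pow_pos (by omega) i) (Nat.factorial_pos i)
  have hM : (Finset.univ.filter (Mpred h i)).card
      = m.choose (2 * i) * ((2 * i).factorial / (2 ^ i * i.factorial)) := by
    apply Nat.eq_of_mul_eq_mul_right hpos
    rw [step_B h, Nat.descFactorial_eq_factorial_mul_choose, mul_assoc,
      Nat.div_mul_cancel (pow_fact_dvd i)]
    ring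
  rw [hM]
  ring
end

end CardFpf

/-- The number of pairs `(f, L)` where `f : Fin m → Fin n` is fixed point free and
`L` is a set of exactly `i` symmetric pairs of `f` equals
`(n−1)^{m−2i} · C(m,2i) · (2i)!/(2^i i!)`. -/
theorem card_fpf_with_labelled_symm_pairs (m n i : ℕ) (h : m ≤ n) (hi : 2 * i ≤ m) :
    Nat.card {p : (Fin m → Fin n) × Finset (Finset (Fin n)) //
        FixedPointFree h p.1 ∧ p.2.card = i ∧ ∀ e ∈ p.2, IsSymmPair h p.1 e} =
      (n - 1) ^ (m - 2 * i) * m.choose (2 * i) * ((2 * i).factorial / (2 ^ i * i.factorial)) :=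
  CardFpf.final h hi
end

section
/- Let m ≤ n be natural numbers, let k, ℓ be natural numbers, and let w : Fin k → ℚ, x : Fin ℓ → ℚ, and y ∈ ℚ be weights. Consider labellings of the complete graph on vertex set Fin n with k symmetric colours (with weights w) and ℓ+1 directed colours (with weights x for the first ℓ directed colours and y for the last directed colour). Then the sum of the weights of those labellings in which the edges of the last directed colour define an anti-involutive function from Fin m to Fin n equals I(m,n) · y^m · L_{k,ℓ}(C(n,2) − m, w, x). -/
/-- `L_{k,ℓ}(N, w, x)`, the weighted count of labellings of `N` edges with `k`
symmetric and `ℓ` directed colours; tuples summing to `N` are encoded as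
functions `(Fin k ⊕ Fin ℓ) → Fin (N+1)`. -/
def Lkl (k l N : ℕ) (w : Fin k → ℚ) (x : Fin l → ℚ) : ℚ :=
  ∑ d ∈ Finset.univ.filter
      (fun d : (Fin k ⊕ Fin l) → Fin (N + 1) => ∑ s : Fin k ⊕ Fin l, (d s).val = N),
    (Nat.multinomial Finset.univ (fun s => (d s).val) : ℚ) *
      2 ^ (∑ q : Fin l, (d (Sum.inr q)).val) *
      (∏ p : Fin k, w p ^ (d (Sum.inl p)).val) *
      (∏ q : Fin l, x q ^ (d (Sum.inr q)).val)

/-- `I(m,n) = ∑_{i=0}^{⌊m/2⌋} (−1)^i (n−1)^{m−2i} C(m,2i) (2i)!/(2^i i!)`. -/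
def Ifun (m n : ℕ) : ℤ :=
  ∑ i ∈ Finset.range (m / 2 + 1),
    (-1 : ℤ) ^ i * ((n : ℤ) - 1) ^ (m - 2 * i) * (m.choose (2 * i) : ℤ) *
      (((2 * i).factorial / (2 ^ i * i.factorial) : ℕ) : ℤ)

/-- The edges of the complete graph on `Fin n`: two-element subsets. -/
abbrev Edge (n : ℕ) := {e : Finset (Fin n) // e.card = 2}

/-- A labelling assigns to each edge either a symmetric colour `p : Fin k` or a
directed colour `q : Fin (ℓ+1)` together with an orientation `v ∈ e`. -/
def IsLabelling {n k l : ℕ} (c : Edge n → (Fin k ⊕ (Fin (l + 1) × Fin n))) : Prop :=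
  ∀ (e : Edge n) (q : Fin (l + 1)) (v : Fin n), c e = Sum.inr (q, v) → v ∈ e.val

/-- The edges of the last directed colour define the anti-involutive function
`f : Fin m → Fin n`: the relation `{(u,v) : {u,v} is labelled (last, v)}` is
exactly the graph of a function with domain `{u : u < m}`, and that function is
anti-involutive. -/
def DefinesAntiInvol {n k l : ℕ} {m : ℕ} (h : m ≤ n)
    (c : Edge n → (Fin k ⊕ (Fin (l + 1) × Fin n))) : Prop :=
  ∃ f : Fin m → Fin n, AntiInvol h f ∧
    ∀ u v : Fin n,
      ((∃ e : Edge n, c e = Sum.inr (Fin.last l, v) ∧ u ∈ e.val ∧ u ≠ v) ↔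
        ∃ hu : u.val < m, f ⟨u.val, hu⟩ = v)



open Finset

lemma lkl_eq (k l N : ℕ) (w : Fin k → ℚ) (x : Fin l → ℚ) :
    ((∑ p, w p) + ∑ q : Fin l, 2 * x q) ^ N = Lkl k l N w x := by
  classical
  have h1 : ((∑ p, w p) + ∑ q : Fin l, 2 * x q)
      = ∑ s : Fin k ⊕ Fin l, Sum.elim w (fun q => 2 * x q) s := by
    rw [Fintype.sum_sum_type]; simp
  rw [h1, Finset.sum_pow_eq_sum_piAntidiag]
  unfold Lkl
  refine Finset.sum_nbij' (fun d => fun s => (⟨min (d s) N, by omega⟩ : Fin (N+1)))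
    (fun d => fun s => (d s).val) ?_ ?_ ?_ ?_ ?_
  · intro d hd
    rw [Finset.mem_piAntidiag] at hd
    have hle : ∀ s, d s ≤ N := fun s => hd.1 ▸ Finset.single_le_sum (f := d) (by intros; positivity) (Finset.mem_univ s)
    simp only [Finset.mem_filter, Finset.mem_univ, true_and]
    calc ∑ s : Fin k ⊕ Fin l, ((⟨min (d s) N, by omega⟩ : Fin (N+1)) : ℕ)
        = ∑ s : Fin k ⊕ Fin l, d s := Finset.sum_congr rfl fun s _ => by
          simp [Nat.min_eq_left (hle s)]
      _ = N := hd.1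
  · intro d hd
    simp only [Finset.mem_filter, Finset.mem_univ, true_and] at hd
    rw [Finset.mem_piAntidiag]
    exact ⟨hd, fun i _ => Finset.mem_univ i⟩
  · intro d hd
    rw [Finset.mem_piAntidiag] at hd
    have hle : ∀ s, d s ≤ N := fun s => hd.1 ▸ Finset.single_le_sum (f := d) (by intros; positivity) (Finset.mem_univ s)
    funext s; simp [Nat.min_eq_left (hle s)]
  · intro d hd
    funext s
    ext
    simp only [Finset.mem_filter, Finset.mem_univ, true_and] at hd
    have hle : (d s).val ≤ N :=
      le_of_le_of_eq (Finset.single_le_sum (f := fun s => (d s).val)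
        (by intros; positivity) (Finset.mem_univ s)) hd
    simp [Nat.min_eq_left hle]
  · intro d hd
    rw [Finset.mem_piAntidiag] at hd
    have hle : ∀ s, d s ≤ N := fun s => hd.1 ▸ Finset.single_le_sum (f := d) (by intros; positivity) (Finset.mem_univ s)
    simp only [Nat.min_eq_left (hle _)]
    rw [Fintype.prod_sum_type]
    simp only [Sum.elim_inl, Sum.elim_inr, mul_pow]
    rw [Finset.prod_mul_distrib, Finset.prod_pow_eq_pow_sum]
    push_cast
    ring

def GP (n : ℕ) (s : Finset (Fin n)) : Finset (Fin n → Fin n) :=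
  univ.filter (fun f => (∀ u, u ∉ s → f u = u) ∧ (∀ u ∈ s, f u ≠ u) ∧
    ∀ u ∈ s, f u ∈ s → f (f u) ≠ u)

lemma mem_GP {n : ℕ} {s : Finset (Fin n)} {f : Fin n → Fin n} :
    f ∈ GP n s ↔ ((∀ u, u ∉ s → f u = u) ∧ (∀ u ∈ s, f u ≠ u) ∧
      ∀ u ∈ s, f u ∈ s → f (f u) ≠ u) := by
  simp [GP]

lemma upd_mem_erase {n : ℕ} {s : Finset (Fin n)} {b v : Fin n} (hb : b ∈ s) (hvb : v ≠ b)
    {f : Fin n → Fin n} (hf : f ∈ GP n s) (hfb : f b = v) :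
    Function.update f b b ∈ GP n (s.erase b) ∧ (v ∈ s → Function.update f b b v ≠ b) := by
  obtain ⟨h1, h2, h3⟩ := mem_GP.mp hf
  have hFv : Function.update f b b v = f v := Function.update_of_ne hvb _ _
  refine ⟨mem_GP.mpr ⟨?_, ?_, ?_⟩, ?_⟩
  · intro u hu
    by_cases hub : u = b
    · subst hub; simp
    · rw [Function.update_of_ne hub]
      exact h1 u (fun hus => hu (mem_erase.mpr ⟨hub, hus⟩))
  · intro u hu
    obtain ⟨hub, hus⟩ := mem_erase.mp hu
    rw [Function.update_of_ne hub]
    exact h2 u hus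
  · intro u hu hFu
    obtain ⟨hub, hus⟩ := mem_erase.mp hu
    rw [Function.update_of_ne hub] at hFu ⊢
    obtain ⟨hfub, hfus⟩ := mem_erase.mp hFu
    rw [Function.update_of_ne hfub]
    exact h3 u hus hfus
  · intro hvs
    rw [hFv]
    intro hfvb
    exact h3 v hvs (hfvb ▸ hb) (by rw [hfvb, hfb])

lemma upd_mem_full {n : ℕ} {s : Finset (Fin n)} {b v : Fin n} (hb : b ∈ s) (hvb : v ≠ b)
    {g : Fin n → Fin n} (hg : g ∈ GP n (s.erase b)) (hgv : v ∈ s → g v ≠ b) :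
    Function.update g b v ∈ GP n s := by
  obtain ⟨h1, h2, h3⟩ := mem_GP.mp hg
  refine mem_GP.mpr ⟨?_, ?_, ?_⟩
  · intro u hu
    have hub : u ≠ b := fun h => hu (h ▸ hb)
    rw [Function.update_of_ne hub]
    exact h1 u (fun h => hu (mem_of_mem_erase h))
  · intro u hu
    by_cases hub : u = b
    · subst hub; simpa using hvb
    · rw [Function.update_of_ne hub]
      exact h2 u (mem_erase.mpr ⟨hub, hu⟩)
  · intro u hu hFu
    by_cases hub : u = b
    · subst hub
      rw [Function.update_self] at hFu ⊢
      rw [Function.update_of_ne hvb]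
      exact hgv hFu
    · rw [Function.update_of_ne hub] at hFu ⊢
      by_cases hgub : g u = b
      · rw [hgub, Function.update_self]
        intro hvu
        exact hgv (hvu ▸ hu) (hvu ▸ hgub)
      · rw [Function.update_of_ne hgub]
        intro h
        exact h2 u (mem_erase.mpr ⟨hub, hu⟩) (by
          by_contra _
          exact absurd h (h3 u (mem_erase.mpr ⟨hub, hu⟩) (mem_erase.mpr ⟨hgub, hFu⟩)))

lemma Kcard {n : ℕ} {s : Finset (Fin n)} {b v : Fin n} (hb : b ∈ s) (hvb : v ≠ b) :
    ((GP n s).filter (fun f => f b = v)).card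
      = ((GP n (s.erase b)).filter (fun g => v ∈ s → g v ≠ b)).card := by
  classical
  refine Finset.card_bij' (fun f _ => Function.update f b b)
    (fun g _ => Function.update g b v) ?_ ?_ ?_ ?_
  · intro f hf
    rw [mem_filter] at hf
    obtain ⟨hmem, hcond⟩ := upd_mem_erase hb hvb hf.1 hf.2
    exact mem_filter.mpr ⟨hmem, hcond⟩
  · intro g hg
    rw [mem_filter] at hg
    refine mem_filter.mpr ⟨upd_mem_full hb hvb hg.1 hg.2, by simp⟩
  · intro f hf
    rw [mem_filter] at hf
    funext u
    by_cases hub : u = b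
    · subst hub; simp [hf.2]
    · simp [Function.update_of_ne hub]
  · intro g hg
    rw [mem_filter] at hg
    have hgb : g b = b := (mem_GP.mp hg.1).1 b (notMem_erase b s)
    funext u
    by_cases hub : u = b
    · subst hub; simp [hgb]
    · simp [Function.update_of_ne hub]

lemma Kcard_notmem {n : ℕ} {s : Finset (Fin n)} {b v : Fin n} (hb : b ∈ s) (hvb : v ≠ b)
    (hvs : v ∉ s) :
    ((GP n s).filter (fun f => f b = v)).card = (GP n (s.erase b)).card := by
  rw [Kcard hb hvb, filter_true_of_mem]
  intro g _ hvs'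
  exact absurd hvs' hvs

lemma Kcard_mem {n : ℕ} {s : Finset (Fin n)} {b v : Fin n} (hb : b ∈ s) (hvb : v ≠ b)
    (hvs : v ∈ s) :
    (((GP n s).filter (fun f => f b = v)).card : ℤ)
      = (GP n (s.erase b)).card - (GP n ((s.erase b).erase v)).card := by
  rw [Kcard hb hvb]
  have hveb : v ∈ s.erase b := mem_erase.mpr ⟨hvb, hvs⟩
  have hbe : b ∉ s.erase b := notMem_erase b s
  have h2 : ((GP n (s.erase b)).filter (fun g => g v = b)).card
      = (GP n ((s.erase b).erase v)).card := by
    rw [Kcard hveb (Ne.symm hvb), filter_true_of_mem]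
    intro g _ hb'
    exact absurd hb' hbe
  have h3 : ((GP n (s.erase b)).filter (fun g => v ∈ s → g v ≠ b)).card
      = ((GP n (s.erase b)).filter (fun g => ¬ (g v = b))).card := by
    apply congrArg
    apply filter_congr
    intro g _
    simp [hvs]
  rw [h3, ← h2]
  have := Finset.card_filter_add_card_filter_not
    (s := GP n (s.erase b)) (p := fun g => g v = b)
  beta_reduce at this
  rw [eq_sub_iff_add_eq, add_comm, ← Nat.cast_add, this]
lemma GP_rec {n : ℕ} {s : Finset (Fin n)} {b : Fin n} (hb : b ∈ s) :
    ((GP n s).card : ℤ)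
      = ((n : ℤ) - 1) * (GP n (s.erase b)).card
        - ∑ v ∈ s.erase b, ((GP n ((s.erase b).erase v)).card : ℤ) := by
  classical
  have hfib : (GP n s).card
      = ∑ v ∈ univ.erase b, ((GP n s).filter (fun f => f b = v)).card :=
    card_eq_sum_card_fiberwise (fun f hf =>
      mem_erase.mpr ⟨(mem_GP.mp hf).2.1 b hb, mem_univ _⟩)
  have key : ∀ v ∈ univ.erase b,
      (((GP n s).filter (fun f => f b = v)).card : ℤ)
        = (GP n (s.erase b)).card
          - (if v ∈ s.erase b then ((GP n ((s.erase b).erase v)).card : ℤ) else 0) := by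
    intro v hv
    obtain ⟨hvb, -⟩ := mem_erase.mp hv
    by_cases hvs : v ∈ s
    · rw [if_pos (mem_erase.mpr ⟨hvb, hvs⟩), Kcard_mem hb hvb hvs]
    · rw [if_neg (fun h => hvs (mem_of_mem_erase h)), Kcard_notmem hb hvb hvs, sub_zero]
  have hcard : ((univ.erase b).card : ℤ) = (n : ℤ) - 1 := by
    rw [card_erase_of_mem (mem_univ b), card_univ, Fintype.card_fin]
    exact Nat.cast_pred b.pos
  calc ((GP n s).card : ℤ)
      = ∑ v ∈ univ.erase b, (((GP n s).filter (fun f => f b = v)).card : ℤ) := by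
        rw [hfib]; push_cast; ring
    _ = ∑ v ∈ univ.erase b, (((GP n (s.erase b)).card : ℤ)
          - (if v ∈ s.erase b then ((GP n ((s.erase b).erase v)).card : ℤ) else 0)) :=
        Finset.sum_congr rfl key
    _ = ((n : ℤ) - 1) * (GP n (s.erase b)).card
        - ∑ v ∈ s.erase b, ((GP n ((s.erase b).erase v)).card : ℤ) := by
        rw [Finset.sum_sub_distrib, Finset.sum_const, nsmul_eq_mul, hcard]
        congr 1
        rw [Finset.sum_ite_mem]
        congr 1
        rw [Finset.inter_eq_right.mpr]
        intro v hv
        exact mem_erase.mpr ⟨(mem_erase.mp hv).1, mem_univ v⟩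

lemma mem_image_equiv' {n : ℕ} {s : Finset (Fin n)} (σ : Equiv.Perm (Fin n)) (u : Fin n) :
    u ∈ s.image σ ↔ σ.symm u ∈ s := by
  constructor
  · rintro h
    obtain ⟨a, ha, rfl⟩ := mem_image.mp h
    simpa using ha
  · intro h
    exact mem_image.mpr ⟨σ.symm u, h, σ.apply_symm_apply u⟩

lemma GP_conj_mem {n : ℕ} (σ : Equiv.Perm (Fin n)) {s : Finset (Fin n)} {f : Fin n → Fin n}
    (hf : f ∈ GP n s) : (σ ∘ f ∘ σ.symm) ∈ GP n (s.image σ) := by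
  obtain ⟨h1, h2, h3⟩ := mem_GP.mp hf
  refine mem_GP.mpr ⟨?_, ?_, ?_⟩
  · intro u hu
    rw [mem_image_equiv'] at hu
    simp only [Function.comp_apply, h1 _ hu, Equiv.apply_symm_apply]
  · intro u hu hc
    rw [mem_image_equiv'] at hu
    apply h2 _ hu
    simpa using congrArg σ.symm hc
  · intro u hu hgu hc
    rw [mem_image_equiv'] at hu hgu
    simp only [Function.comp_apply, Equiv.symm_apply_apply] at hgu hc
    exact h3 _ hu hgu (by simpa using congrArg σ.symm hc)

lemma GP_card_image {n : ℕ} (σ : Equiv.Perm (Fin n)) (s : Finset (Fin n)) :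
    (GP n (s.image σ)).card = (GP n s).card := by
  classical
  have himg : (s.image σ).image σ.symm = s := by
    ext u; simp [mem_image_equiv']
  refine Finset.card_bij' (fun g _ => σ.symm ∘ g ∘ σ) (fun f _ => σ ∘ f ∘ σ.symm)
    ?_ ?_ ?_ ?_
  · intro g hg
    have := GP_conj_mem σ.symm hg
    rw [himg] at this
    simpa using this
  · intro f hf
    exact GP_conj_mem σ hf
  · intro g _
    funext u; simp
  · intro f _
    funext u; simp

lemma exists_perm_image {α : Type*} [Fintype α] [DecidableEq α] {s t : Finset α}
    (h : s.card = t.card) : ∃ σ : Equiv.Perm α, s.image σ = t := by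
  have h2 : sᶜ.card = tᶜ.card := by simp [Finset.card_compl, h]
  let e1 : {x // x ∈ s} ≃ {x // x ∈ t} := Finset.equivOfCardEq h
  let e2 : {x // ¬ x ∈ s} ≃ {x // ¬ x ∈ t} :=
    ((Equiv.subtypeEquivRight (fun x => (Finset.mem_compl (s := s)).symm)).trans
      (Finset.equivOfCardEq h2)).trans
      (Equiv.subtypeEquivRight (fun x => Finset.mem_compl (s := t)))
  refine ⟨(Equiv.sumCompl (· ∈ s)).symm.trans ((Equiv.sumCongr e1 e2).trans
    (Equiv.sumCompl (· ∈ t))), ?_⟩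
  set σ := (Equiv.sumCompl (· ∈ s)).symm.trans ((Equiv.sumCongr e1 e2).trans
    (Equiv.sumCompl (· ∈ t))) with hσ
  have hsub : ∀ a ∈ s, σ a ∈ t := by
    intro a ha
    have : σ a = (e1 ⟨a, ha⟩ : α) := by
      simp only [hσ, Equiv.trans_apply, Equiv.sumCompl_symm_apply_of_pos (p := (· ∈ s)) ha,
        Equiv.sumCongr_apply, Sum.map_inl, Equiv.sumCompl_apply_inl]
    rw [this]
    exact (e1 ⟨a, ha⟩).2
  apply Finset.eq_of_subset_of_card_le
  · intro u hu
    obtain ⟨a, ha, rfl⟩ := mem_image.mp hu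
    exact hsub a ha
  · rw [Finset.card_image_of_injective _ σ.injective, h]

lemma GP_card_eq {n : ℕ} {s t : Finset (Fin n)} (h : s.card = t.card) :
    (GP n s).card = (GP n t).card := by
  classical
  obtain ⟨σ, hσ⟩ := exists_perm_image h
  rw [← hσ, GP_card_image]

def DF : ℕ → ℕ
  | 0 => 1
  | i + 1 => (2 * i + 1) * DF i

lemma DF_key (i : ℕ) : 2 ^ i * i.factorial * DF i = (2 * i).factorial := by
  induction i with
  | zero => simp [DF]
  | succ i ih =>
    have h2 : 2 * (i + 1) = (2 * i + 1) + 1 := by ring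
    have e1 : (2 * (i + 1)).factorial = ((2 * i + 1) + 1) * ((2 * i + 1) * (2 * i).factorial) := by
      rw [h2, Nat.factorial_succ, Nat.factorial_succ]
    have e2 : (i + 1).factorial = (i + 1) * i.factorial := Nat.factorial_succ i
    have e3 : DF (i + 1) = (2 * i + 1) * DF i := rfl
    rw [e1, e2, e3, ← ih, pow_succ]
    ring

lemma DF_eq (i : ℕ) : (2 * i).factorial / (2 ^ i * i.factorial) = DF i :=
  Nat.div_eq_of_eq_mul_left (by positivity) (by rw [← DF_key i]; ring)

def Tm (m n i : ℕ) : ℤ :=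
  (-1 : ℤ) ^ i * ((n : ℤ) - 1) ^ (m - 2 * i) * (m.choose (2 * i) : ℤ) * (DF i : ℤ)

lemma Ifun_ext (m n M : ℕ) (hM : m / 2 + 1 ≤ M) :
    Ifun m n = ∑ i ∈ Finset.range M, Tm m n i := by
  rw [Ifun]
  have h1 : ∀ i, (-1 : ℤ) ^ i * ((n : ℤ) - 1) ^ (m - 2 * i) * (m.choose (2 * i) : ℤ) *
      (((2 * i).factorial / (2 ^ i * i.factorial) : ℕ) : ℤ) = Tm m n i := by
    intro i; rw [DF_eq]; rfl
  rw [Finset.sum_congr rfl (fun i _ => h1 i)]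
  apply Finset.sum_subset (Finset.range_subset_range.mpr hM)
  intro i _ hi
  rw [Finset.mem_range, not_lt] at hi
  have : m < 2 * i := by omega
  simp [Tm, Nat.choose_eq_zero_of_lt this]

lemma hkey (m i : ℕ) : (m + 2).choose (2 * (i + 1)) * DF (i + 1)
    = (m + 1).choose (2 * (i + 1)) * DF (i + 1) + (m + 1) * (m.choose (2 * i) * DF i) := by
  have h1 : 2 * (i + 1) = (2 * i + 1) + 1 := by ring
  rw [h1, show m + 2 = (m + 1) + 1 from rfl, Nat.choose_succ_succ, add_mul, add_comm]
  congr 1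
  have h2 := Nat.add_one_mul_choose_eq m (2 * i)
  calc (m + 1).choose (2 * i + 1) * DF (i + 1)
      = ((m + 1).choose (2 * i + 1) * (2 * i + 1)) * DF i := by
        rw [show DF (i+1) = (2*i+1) * DF i from rfl]; ring
    _ = ((m + 1) * m.choose (2 * i)) * DF i := by rw [← h2]
    _ = (m + 1) * (m.choose (2 * i) * DF i) := by ring

lemma Ifun_zero (n : ℕ) : Ifun 0 n = 1 := by
  simp [Ifun]

lemma Ifun_one (n : ℕ) : Ifun 1 n = (n : ℤ) - 1 := by
  simp [Ifun]

lemma Ifun_rec (m n : ℕ) :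
    Ifun (m + 2) n = ((n : ℤ) - 1) * Ifun (m + 1) n - ((m : ℤ) + 1) * Ifun m n := by
  set X : ℤ := (n : ℤ) - 1 with hX
  have e2 : Ifun (m + 2) n = ∑ i ∈ Finset.range (m + 3), Tm (m + 2) n i :=
    Ifun_ext _ _ _ (by omega)
  have e1 : Ifun (m + 1) n = ∑ i ∈ Finset.range (m + 3), Tm (m + 1) n i :=
    Ifun_ext _ _ _ (by omega)
  have e0 : Ifun m n = ∑ i ∈ Finset.range (m + 2), Tm m n i :=
    Ifun_ext _ _ _ (by omega)
  have hXT : ∀ i, X * Tm (m + 1) n (i + 1)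
      = (-1 : ℤ) ^ (i + 1) * X ^ (m - 2 * i) * ((m + 1).choose (2 * (i + 1)) : ℤ)
          * (DF (i + 1) : ℤ) := by
    intro i
    by_cases hle : 2 * i + 1 ≤ m
    · have : (m + 1) - 2 * (i + 1) + 1 = m - 2 * i := by omega
      rw [Tm, ← this, pow_succ]
      ring
    · have h0 : (m + 1).choose (2 * (i + 1)) = 0 := Nat.choose_eq_zero_of_lt (by omega)
      rw [Tm, h0]
      push_cast
      ring
  have hpt : ∀ i ∈ Finset.range (m + 2),
      Tm (m + 2) n (i + 1) = X * Tm (m + 1) n (i + 1) - ((m : ℤ) + 1) * Tm m n i := by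
    intro i _
    rw [hXT i]
    have hs : (m + 2) - 2 * (i + 1) = m - 2 * i := by omega
    rw [Tm, Tm, hs]
    have hk := hkey m i
    have hkz : ((m + 2).choose (2 * (i + 1)) : ℤ) * (DF (i + 1) : ℤ)
        = ((m + 1).choose (2 * (i + 1)) : ℤ) * (DF (i + 1) : ℤ)
          + ((m : ℤ) + 1) * ((m.choose (2 * i) : ℤ) * (DF i : ℤ)) := by
      exact_mod_cast congrArg (Nat.cast : ℕ → ℤ) hk
    linear_combination ((-1 : ℤ)) ^ (i + 1) * X ^ (m - 2 * i) * hkz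
  rw [e2, e1, e0, Finset.sum_range_succ' (Tm (m + 2) n) (m + 2),
    Finset.sum_range_succ' (Tm (m + 1) n) (m + 2),
    Finset.sum_congr rfl hpt]
  rw [Finset.sum_sub_distrib, mul_add, Finset.mul_sum, Finset.mul_sum]
  have h0 : Tm (m + 2) n 0 = X * Tm (m + 1) n 0 := by
    simp [Tm, pow_succ]
    ring
  rw [h0]
  ring

def seg (n j : ℕ) : Finset (Fin n) := univ.filter (fun u => u.val < j)

lemma mem_seg {n j : ℕ} {u : Fin n} : u ∈ seg n j ↔ u.val < j := by simp [seg]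

lemma card_seg {n j : ℕ} (h : j ≤ n) : (seg n j).card = j := by
  have : seg n j = Finset.attachFin (Finset.range j)
      (fun m hm => lt_of_lt_of_le (Finset.mem_range.mp hm) h) := by
    ext a
    simp [seg, Finset.mem_attachFin]
  rw [this, Finset.card_attachFin, Finset.card_range]

lemma GP_empty (n : ℕ) : (GP n (∅ : Finset (Fin n))).card = 1 := by
  have : GP n (∅ : Finset (Fin n)) = {fun u => u} := by
    ext f
    simp [mem_GP, funext_iff]
  rw [this, card_singleton]

lemma seg_zero (n : ℕ) : seg n 0 = ∅ := by
  ext u; simp [mem_seg]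

lemma GP_seg_one {n : ℕ} (h : 1 ≤ n) : ((GP n (seg n 1)).card : ℤ) = (n : ℤ) - 1 := by
  have hb : (⟨0, h⟩ : Fin n) ∈ seg n 1 := mem_seg.mpr (by simp)
  have hseg : (seg n 1).erase ⟨0, h⟩ = ∅ := by
    ext u
    simp only [mem_erase, mem_seg, notMem_empty, iff_false, not_and, ne_eq]
    intro hne hu
    exact hne (Fin.ext (by simpa using Nat.lt_one_iff.mp hu))
  rw [GP_rec hb, hseg]
  simp [GP_empty]

lemma GP_rec_two {n j : ℕ} (h : j + 2 ≤ n) :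
    ((GP n (seg n (j + 2))).card : ℤ)
      = ((n : ℤ) - 1) * (GP n (seg n (j + 1))).card
        - ((j : ℤ) + 1) * (GP n (seg n j)).card := by
  have hb : (⟨j + 1, by omega⟩ : Fin n) ∈ seg n (j + 2) := mem_seg.mpr (by simp)
  rw [GP_rec hb]
  have hc1 : ((seg n (j + 2)).erase ⟨j + 1, by omega⟩).card = j + 1 := by
    rw [card_erase_of_mem hb, card_seg h]
    omega
  have hA : (GP n ((seg n (j + 2)).erase ⟨j + 1, by omega⟩)).card
      = (GP n (seg n (j + 1))).card :=
    GP_card_eq (by rw [hc1, card_seg (by omega)])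
  have hB : ∀ v ∈ (seg n (j + 2)).erase ⟨j + 1, by omega⟩,
      ((GP n (((seg n (j + 2)).erase ⟨j + 1, by omega⟩).erase v)).card : ℤ)
        = ((GP n (seg n j)).card : ℤ) := by
    intro v hv
    have := GP_card_eq (n := n) (s := ((seg n (j + 2)).erase ⟨j + 1, by omega⟩).erase v)
      (t := seg n j) (by rw [card_erase_of_mem hv, hc1, card_seg (by omega)]; omega)
    exact_mod_cast congrArg (Nat.cast : ℕ → ℤ) this
  rw [Finset.sum_congr rfl hB, Finset.sum_const, hc1, hA, nsmul_eq_mul]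
  push_cast
  ring

lemma GP_seg_eq_Ifun {n : ℕ} : ∀ m, m ≤ n → ((GP n (seg n m)).card : ℤ) = Ifun m n := by
  intro m
  induction m using Nat.strong_induction_on with
  | _ m ih =>
    match m with
    | 0 => intro _; rw [seg_zero, Ifun_zero, GP_empty n]; norm_num
    | 1 => intro h1; rw [GP_seg_one h1, Ifun_one]
    | (j + 2) =>
      intro h
      rw [GP_rec_two h, Ifun_rec, ih (j + 1) (by omega) (by omega), ih j (by omega) (by omega)]


def GoodF {m n : ℕ} (hmn : m ≤ n) (f : Fin m → Fin n) : Prop :=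
  (∀ u, f u ≠ Fin.castLE hmn u) ∧ AntiInvol hmn f

def InEf {m n : ℕ} (hmn : m ≤ n) (f : Fin m → Fin n) (e : Edge n) : Prop :=
  ∃ u : Fin m, e.val = {Fin.castLE hmn u, f u}

def PCol {m n : ℕ} (hmn : m ≤ n) (k l : ℕ) (f : Fin m → Fin n) (e : Edge n) :
    (Fin k ⊕ (Fin (l + 1) × Fin n)) → Prop
  | Sum.inl _ => ¬ InEf hmn f e
  | Sum.inr qv => qv.2 ∈ e.val ∧
      (if qv.1 = Fin.last l
       then ∃ u : Fin m, f u = qv.2 ∧ Fin.castLE hmn u ∈ e.val ∧ Fin.castLE hmn u ≠ qv.2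
       else ¬ InEf hmn f e)

lemma PCol_inl {m n : ℕ} {hmn : m ≤ n} {k l : ℕ} {f : Fin m → Fin n} {e : Edge n}
    {p : Fin k} : PCol hmn k l f e (Sum.inl p) ↔ ¬ InEf hmn f e := Iff.rfl

lemma PCol_inr {m n : ℕ} {hmn : m ≤ n} {k l : ℕ} {f : Fin m → Fin n} {e : Edge n}
    {qv : Fin (l + 1) × Fin n} : PCol hmn k l f e (Sum.inr qv) ↔
      (qv.2 ∈ e.val ∧
      (if qv.1 = Fin.last l
       then ∃ u : Fin m, f u = qv.2 ∧ Fin.castLE hmn u ∈ e.val ∧ Fin.castLE hmn u ≠ qv.2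
       else ¬ InEf hmn f e)) := Iff.rfl

lemma edge_eq_pair {n : ℕ} (e : Edge n) {a b : Fin n} (ha : a ∈ e.val) (hb : b ∈ e.val)
    (hab : a ≠ b) : e.val = {a, b} := by
  refine (Finset.eq_of_subset_of_card_le ?_ ?_).symm
  · intro z hz
    rcases Finset.mem_insert.mp hz with h | h
    · exact h ▸ ha
    · exact (Finset.mem_singleton.mp h) ▸ hb
  · rw [Finset.card_pair hab, e.2]

lemma edge_other {n : ℕ} (e : Edge n) {a : Fin n} (ha : a ∈ e.val) :
    ∃ b ∈ e.val, b ≠ a := by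
  obtain ⟨u1, u2, h12, hval⟩ := Finset.card_eq_two.mp e.2
  rw [hval] at ha ⊢
  rcases Finset.mem_insert.mp ha with h | h
  · exact ⟨u2, by simp, fun he2 => h12 (he2.trans h).symm⟩
  · rw [Finset.mem_singleton] at h
    exact ⟨u1, by simp, fun he1 => h12 (he1.trans h)⟩

lemma pair_injective {m n : ℕ} {hmn : m ≤ n} {f : Fin m → Fin n} (hf : GoodF hmn f) :
    Function.Injective (fun u : Fin m => ({Fin.castLE hmn u, f u} : Finset (Fin n))) := by
  intro u u' h
  dsimp only at h
  have h1 : Fin.castLE hmn u ∈ ({Fin.castLE hmn u', f u'} : Finset (Fin n)) := by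
    rw [← h]; simp
  have h2 : f u ∈ ({Fin.castLE hmn u', f u'} : Finset (Fin n)) := by
    rw [← h]; simp
  rcases Finset.mem_insert.mp h1 with hc | hc
  · exact Fin.castLE_injective hmn hc
  · rw [Finset.mem_singleton] at hc
    -- castLE u = f u'
    have hlt : (f u').val < m := by rw [← hc]; exact u.isLt
    have hne := hf.2 u' hlt
    have hu_eq : (⟨(f u').val, hlt⟩ : Fin m) = u := by
      have h5 : (f u').val = u.val := congrArg Fin.val hc.symm
      exact Fin.ext h5
    rw [hu_eq] at hne
    -- hne : f u ≠ castLE u'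
    rcases Finset.mem_insert.mp h2 with hd | hd
    · exact absurd hd hne
    · rw [Finset.mem_singleton] at hd
      -- f u = f u'
      have h3 : Fin.castLE hmn u' ∈ ({Fin.castLE hmn u, f u} : Finset (Fin n)) := by
        rw [h]; simp
      rcases Finset.mem_insert.mp h3 with he | he
      · exact (Fin.castLE_injective hmn he).symm
      · rw [Finset.mem_singleton] at he
        exact absurd (hd ▸ he.symm) (hf.1 u')

lemma decomp {m n k l : ℕ} (hmn : m ≤ n) (c : Edge n → (Fin k ⊕ (Fin (l + 1) × Fin n))) :
    (IsLabelling c ∧ DefinesAntiInvol hmn c)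
      ↔ ∃ f : Fin m → Fin n, GoodF hmn f ∧ ∀ e, PCol hmn k l f e (c e) := by
  constructor
  · rintro ⟨hL, f, hAI, hiff⟩
    have hne : ∀ u : Fin m, f u ≠ Fin.castLE hmn u := by
      intro u
      obtain ⟨e, hce, hue, hune⟩ := (hiff (Fin.castLE hmn u) (f u)).mpr
        ⟨u.isLt, congrArg f (Fin.ext rfl)⟩
      exact fun hcontra => hune (by rw [hcontra])
    have factA : ∀ (u : Fin m) (e : Edge n), e.val = {Fin.castLE hmn u, f u}
        → c e = Sum.inr (Fin.last l, f u) := by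
      intro u e he
      obtain ⟨e', hce', hue', hune'⟩ := (hiff (Fin.castLE hmn u) (f u)).mpr
        ⟨u.isLt, congrArg f (Fin.ext rfl)⟩
      have hfe' : f u ∈ e'.val := hL e' _ _ hce'
      have : e' = e := Subtype.ext ((edge_eq_pair e' hue' hfe' hune').trans he.symm)
      rw [← this]; exact hce'
    have factB : ∀ (e : Edge n) (v : Fin n), c e = Sum.inr (Fin.last l, v)
        → ∃ u : Fin m, f u = v ∧ Fin.castLE hmn u ∈ e.val ∧ Fin.castLE hmn u ≠ v := by
      intro e v hce
      have hv : v ∈ e.val := hL e _ _ hce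
      obtain ⟨b, hb, hbv⟩ := edge_other e hv
      obtain ⟨hu, hfu⟩ := (hiff b v).mp ⟨e, hce, hb, hbv⟩
      exact ⟨⟨b.val, hu⟩, hfu, by simpa [Fin.ext_iff] using hb, by simpa [Fin.ext_iff] using hbv⟩
    refine ⟨f, ⟨hne, hAI⟩, ?_⟩
    intro e
    rcases hc : c e with p | ⟨q, v⟩
    · rw [PCol_inl]
      rintro ⟨u, he⟩
      rw [factA u e he] at hc
      exact absurd hc (by simp)
    · rw [PCol_inr]
      refine ⟨hL e q v hc, ?_⟩
      by_cases hq : q = Fin.last l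
      · subst hq
        rw [if_pos rfl]
        exact factB e v hc
      · rw [if_neg hq]
        rintro ⟨u, he⟩
        rw [factA u e he] at hc
        injection hc with h2
        exact hq (congrArg Prod.fst h2).symm
  · rintro ⟨f, ⟨hne, hAI⟩, hP⟩
    have hLab : IsLabelling c := by
      intro e q v hce
      have := hP e
      rw [hce, PCol_inr] at this
      exact this.1
    refine ⟨hLab, f, hAI, ?_⟩
    intro u v
    constructor
    · rintro ⟨e, hce, hue, hune⟩
      have hPe := hP e
      rw [hce, PCol_inr, if_pos rfl] at hPe
      obtain ⟨hv, u', hfu', hcu', hcune'⟩ := hPe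
      have hepair : e.val = {Fin.castLE hmn u', v} := edge_eq_pair e hcu' hv hcune'
      have hu_eq : u = Fin.castLE hmn u' := by
        rw [hepair] at hue
        rcases Finset.mem_insert.mp hue with h | h
        · exact h
        · exact absurd (Finset.mem_singleton.mp h) hune
      have hult : u.val < m := by rw [hu_eq]; exact u'.isLt
      refine ⟨hult, ?_⟩
      have : (⟨u.val, hult⟩ : Fin m) = u' := by
        have h5 : u.val = u'.val := congrArg Fin.val hu_eq
        exact Fin.ext h5
      rw [this, hfu']
    · rintro ⟨hu, hfu⟩
      set u' : Fin m := ⟨u.val, hu⟩ with hu'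
      have hcast : Fin.castLE hmn u' = u := Fin.ext rfl
      have huv : u ≠ v := by
        rw [← hcast, ← hfu]
        exact fun h => hne u' h.symm
      set e0 : Edge n := ⟨{u, v}, Finset.card_pair huv⟩ with he0
      have hIn : InEf hmn f e0 := ⟨u', by rw [hcast, hfu]⟩
      have hPe := hP e0
      rcases hc : c e0 with p | ⟨q, v2⟩
      · rw [hc, PCol_inl] at hPe
        exact absurd hIn hPe
      · rw [hc, PCol_inr] at hPe
        obtain ⟨hv2, hcond⟩ := hPe
        by_cases hq : q = Fin.last l
        · subst hq
          rw [if_pos rfl] at hcond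
          obtain ⟨u2, hfu2, hcu2, hcune2⟩ := hcond
          have hv2' : v2 ∈ ({u, v} : Finset (Fin n)) := hv2
          rcases Finset.mem_insert.mp hv2' with h | h
          · -- v2 = u : contradiction with AntiInvol
            exfalso
            have hcu2' : Fin.castLE hmn u2 ∈ ({u, v} : Finset (Fin n)) := hcu2
            have hcu2v : Fin.castLE hmn u2 = v := by
              rcases Finset.mem_insert.mp hcu2' with h2 | h2
              · exact absurd (h2.trans h.symm) hcune2
              · exact Finset.mem_singleton.mp h2
            -- f u' = v = castLE u2, f u2 = v2 = u = castLE u'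
            have hlt2 : (f u').val < m := by rw [hfu, ← hcu2v]; exact u2.isLt
            have heq2 : (⟨(f u').val, hlt2⟩ : Fin m) = u2 := by
              apply Fin.ext
              have : (f u').val = (Fin.castLE hmn u2).val := by rw [hfu, ← hcu2v]
              exact this
            have := hAI u' hlt2
            rw [heq2] at this
            exact this (by rw [hfu2, h, hcast])
          · rw [Finset.mem_singleton] at h
            subst h
            exact ⟨e0, hc, by simp [he0], huv⟩
        · rw [if_neg hq] at hcond
          exact absurd hIn hcond

lemma uniqF {m n k l : ℕ} {hmn : m ≤ n} {c : Edge n → (Fin k ⊕ (Fin (l + 1) × Fin n))}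
    {f f' : Fin m → Fin n} (hf : GoodF hmn f) (hPf : ∀ e, PCol hmn k l f e (c e))
    (hf' : GoodF hmn f') (hPf' : ∀ e, PCol hmn k l f' e (c e)) : f = f' := by
  funext u
  set e0 : Edge n := ⟨{Fin.castLE hmn u, f u}, Finset.card_pair (Ne.symm (hf.1 u))⟩ with he0
  have hIn : InEf hmn f e0 := ⟨u, rfl⟩
  have hPe := hPf e0
  have hPe' := hPf' e0
  rcases hc : c e0 with p | ⟨q, v⟩
  · rw [hc, PCol_inl] at hPe
    exact absurd hIn hPe
  · rw [hc, PCol_inr] at hPe hPe'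
    obtain ⟨hv, hcond⟩ := hPe
    obtain ⟨-, hcond'⟩ := hPe'
    by_cases hq : q = Fin.last l
    · subst hq
      rw [if_pos rfl] at hcond hcond'
      obtain ⟨u1, hfu1, hcu1, hcune1⟩ := hcond
      obtain ⟨u2, hfu2, hcu2, hcune2⟩ := hcond'
      -- first: v = f u
      have hv' : v ∈ ({Fin.castLE hmn u, f u} : Finset (Fin n)) := hv
      have hvfu : v = f u := by
        rcases Finset.mem_insert.mp hv' with h | h
        · -- v = castLE u: contradiction via AntiInvol
          exfalso
          have hcu1' : Fin.castLE hmn u1 ∈ ({Fin.castLE hmn u, f u} : Finset (Fin n)) := hcu1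
          have hcu1fu : Fin.castLE hmn u1 = f u := by
            rcases Finset.mem_insert.mp hcu1' with h2 | h2
            · exact absurd (h2.trans h.symm) hcune1
            · exact Finset.mem_singleton.mp h2
          have hlt : (f u).val < m := by rw [← hcu1fu]; exact u1.isLt
          have heq : (⟨(f u).val, hlt⟩ : Fin m) = u1 := by
            apply Fin.ext
            have : (f u).val = (Fin.castLE hmn u1).val := by rw [← hcu1fu]
            exact this
          have := hf.2 u hlt
          rw [heq] at this
          exact this (by rw [hfu1, h])
        · exact Finset.mem_singleton.mp h
      -- then castLE u2 = castLE u
      have hcu2' : Fin.castLE hmn u2 ∈ ({Fin.castLE hmn u, f u} : Finset (Fin n)) := hcu2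
      have hu2u : u2 = u := by
        rcases Finset.mem_insert.mp hcu2' with h2 | h2
        · exact Fin.castLE_injective hmn h2
        · exact absurd ((Finset.mem_singleton.mp h2).trans hvfu.symm) hcune2
      rw [hu2u] at hfu2
      rw [hfu2]
      exact hvfu.symm
    · rw [if_neg hq] at hcond
      exact absurd hIn hcond

lemma card_edge (n : ℕ) : Fintype.card (Edge n) = n.choose 2 := by
  classical
  rw [Fintype.card_subtype]
  have : (Finset.univ.filter (fun e : Finset (Fin n) => e.card = 2))
      = (Finset.univ : Finset (Fin n)).powersetCard 2 := by
    rw [Finset.powersetCard_eq_filter, Finset.powerset_univ]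
  rw [this, Finset.card_powersetCard, Finset.card_univ, Fintype.card_fin]

open Classical in
lemma filter_PCol_inEf {m n k l : ℕ} {hmn : m ≤ n} {f : Fin m → Fin n} (hf : GoodF hmn f)
    (u0 : Fin m) (e : Edge n) (he : e.val = {Fin.castLE hmn u0, f u0}) :
    Finset.univ.filter (PCol hmn k l f e) = {Sum.inr (Fin.last l, f u0)} := by
  ext a
  simp only [Finset.mem_filter, Finset.mem_univ, true_and, Finset.mem_singleton]
  constructor
  · rcases a with p | ⟨q, v⟩
    · intro hP
      exact absurd ⟨u0, he⟩ (PCol_inl.mp hP)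
    · intro hP
      obtain ⟨hv, hcond⟩ := PCol_inr.mp hP
      by_cases hq : q = Fin.last l
      · subst hq
        rw [if_pos rfl] at hcond
        obtain ⟨u, hfu, hcu, hcune⟩ := hcond
        have hv' : v ∈ ({Fin.castLE hmn u0, f u0} : Finset (Fin n)) := he ▸ hv
        have hvf : v = f u0 := by
          rcases Finset.mem_insert.mp hv' with h | h
          · exfalso
            have hcu' : Fin.castLE hmn u ∈ ({Fin.castLE hmn u0, f u0} : Finset (Fin n)) :=
              he ▸ hcu
            have hcuf : Fin.castLE hmn u = f u0 := by
              rcases Finset.mem_insert.mp hcu' with h2 | h2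
              · exact absurd (h2.trans h.symm) hcune
              · exact Finset.mem_singleton.mp h2
            have hlt : (f u0).val < m := by rw [← hcuf]; exact u.isLt
            have heq : (⟨(f u0).val, hlt⟩ : Fin m) = u := by
              have h5 : (f u0).val = u.val := congrArg Fin.val hcuf.symm
              exact Fin.ext h5
            have := hf.2 u0 hlt
            rw [heq] at this
            exact this (by rw [hfu, h])
          · exact Finset.mem_singleton.mp h
        rw [hvf]
      · rw [if_neg hq] at hcond
        exact absurd ⟨u0, he⟩ hcond
  · rintro rfl
    refine PCol_inr.mpr ⟨by rw [he]; simp, ?_⟩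
    rw [if_pos rfl]
    exact ⟨u0, rfl, by rw [he]; simp, Ne.symm (hf.1 u0)⟩

open Classical in
lemma sum_wt_notInEf {m n k l : ℕ} {hmn : m ≤ n} {f : Fin m → Fin n}
    (w : Fin k → ℚ) (x : Fin l → ℚ) (y : ℚ) {e : Edge n} (he : ¬ InEf hmn f e) :
    ∑ a ∈ Finset.univ.filter (PCol hmn k l f e),
      Sum.elim w (fun qv : Fin (l + 1) × Fin n => (Fin.snoc x y : Fin (l + 1) → ℚ) qv.1) a
      = (∑ p, w p) + ∑ q : Fin l, 2 * x q := by
  rw [Finset.sum_filter, Fintype.sum_sum_type]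
  have h1 : ∀ p : Fin k, (if PCol hmn k l f e (Sum.inl p)
      then Sum.elim w (fun qv : Fin (l + 1) × Fin n => (Fin.snoc x y : Fin (l + 1) → ℚ) qv.1) (Sum.inl p) else 0)
      = w p := by
    intro p
    rw [if_pos (PCol_inl.mpr he)]
    rfl
  rw [Finset.sum_congr rfl (fun p _ => h1 p), Fintype.sum_prod_type,
    Fin.sum_univ_castSucc (n := l)]
  have hlast : ∀ v : Fin n, (if PCol hmn k l f e (Sum.inr (Fin.last l, v))
      then Sum.elim w (fun qv : Fin (l + 1) × Fin n => (Fin.snoc x y : Fin (l + 1) → ℚ) qv.1)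
        (Sum.inr (Fin.last l, v)) else 0) = 0 := by
    intro v
    rw [if_neg]
    intro hP
    obtain ⟨hv, hcond⟩ := PCol_inr.mp hP
    rw [if_pos rfl] at hcond
    obtain ⟨u, hfu, hcu, hcune⟩ := hcond
    exact he ⟨u, by rw [edge_eq_pair e hcu hv hcune, hfu]⟩
  have hcs : ∀ q : Fin l, ∀ v : Fin n,
      (if PCol hmn k l f e (Sum.inr (Fin.castSucc q, v))
      then Sum.elim w (fun qv : Fin (l + 1) × Fin n => (Fin.snoc x y : Fin (l + 1) → ℚ) qv.1)
        (Sum.inr (Fin.castSucc q, v)) else 0)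
      = if v ∈ e.val then x q else 0 := by
    intro q v
    have hqne : (Fin.castSucc q : Fin (l + 1)) ≠ Fin.last l := Fin.ne_last_of_lt
      (Fin.castSucc_lt_last q)
    by_cases hv : v ∈ e.val
    · rw [if_pos (PCol_inr.mpr ⟨hv, by rw [if_neg hqne]; exact he⟩), if_pos hv]
      show (Fin.snoc x y : Fin (l + 1) → ℚ) (Fin.castSucc q) = x q
      rw [Fin.snoc_castSucc]
    · rw [if_neg, if_neg hv]
      intro hP
      exact hv (PCol_inr.mp hP).1
  calc (∑ p, w p) + (∑ q : Fin l, ∑ v : Fin n,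
        (if PCol hmn k l f e (Sum.inr (Fin.castSucc q, v))
          then Sum.elim w (fun qv : Fin (l + 1) × Fin n => (Fin.snoc x y : Fin (l + 1) → ℚ) qv.1)
            (Sum.inr (Fin.castSucc q, v)) else 0)
        + ∑ v : Fin n, (if PCol hmn k l f e (Sum.inr (Fin.last l, v))
          then Sum.elim w (fun qv : Fin (l + 1) × Fin n => (Fin.snoc x y : Fin (l + 1) → ℚ) qv.1)
            (Sum.inr (Fin.last l, v)) else 0))
      = (∑ p, w p) + (∑ q : Fin l, ∑ v : Fin n, (if v ∈ e.val then x q else 0) + 0) := by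
        congr 1
        congr 1
        · exact Finset.sum_congr rfl (fun q _ => Finset.sum_congr rfl (fun v _ => hcs q v))
        · exact Finset.sum_eq_zero (fun v _ => hlast v)
    _ = (∑ p, w p) + ∑ q : Fin l, 2 * x q := by
        congr 1
        rw [add_zero]
        refine Finset.sum_congr rfl (fun q _ => ?_)
        rw [Finset.sum_ite_mem, Finset.univ_inter, Finset.sum_const, e.2]
        push_cast
        ring

open Classical in
lemma card_InEf {m n : ℕ} {hmn : m ≤ n} {f : Fin m → Fin n} (hf : GoodF hmn f) :
    (Finset.univ.filter (fun e : Edge n => InEf hmn f e)).card = m := by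
  have himg : Finset.univ.filter (fun e : Edge n => InEf hmn f e)
      = Finset.univ.image (fun u : Fin m =>
          (⟨{Fin.castLE hmn u, f u}, Finset.card_pair (Ne.symm (hf.1 u))⟩ : Edge n)) := by
    ext e
    simp only [Finset.mem_filter, Finset.mem_univ, true_and, Finset.mem_image]
    constructor
    · rintro ⟨u, he⟩
      exact ⟨u, Subtype.ext he.symm⟩
    · rintro ⟨u, -, rfl⟩
      exact ⟨u, rfl⟩
  rw [himg, Finset.card_image_of_injective _ (fun u u' h =>
    pair_injective hf (congrArg Subtype.val h)), Finset.card_univ, Fintype.card_fin]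


open Classical in
lemma good_card_raw {m n : ℕ} (hmn : m ≤ n) :
    (((Finset.univ : Finset (Fin m → Fin n)).filter (fun f : Fin m → Fin n =>
      (∀ u, f u ≠ Fin.castLE hmn u) ∧ AntiInvol hmn f)).card : ℤ) = Ifun m n := by
  classical
  rw [← GP_seg_eq_Ifun m hmn]
  congr 1
  refine Finset.card_bij'
    (fun (f : Fin m → Fin n) _ => fun u : Fin n => if h : u.val < m then f ⟨u.val, h⟩ else u)
    (fun (F : Fin n → Fin n) _ => fun u : Fin m => F (Fin.castLE hmn u)) ?_ ?_ ?_ ?_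
  · intro f hf
    rw [mem_filter] at hf
    obtain ⟨-, h1, h2⟩ := hf
    refine mem_GP.mpr ⟨?_, ?_, ?_⟩
    · intro u hu
      rw [dif_neg (by simpa [mem_seg] using hu)]
    · intro u hu
      rw [mem_seg] at hu
      rw [dif_pos hu]
      intro hc
      exact h1 ⟨u.val, hu⟩ (hc.trans (Fin.ext rfl))
    · intro u hu hfu
      rw [mem_seg] at hu hfu
      rw [dif_pos hu] at hfu ⊢
      rw [dif_pos hfu]
      intro hc
      exact h2 ⟨u.val, hu⟩ hfu (hc.trans (Fin.ext rfl))
  · intro F hF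
    obtain ⟨g1, g2, g3⟩ := mem_GP.mp hF
    rw [mem_filter]
    refine ⟨mem_univ _, ?_, ?_⟩
    · intro u hc
      dsimp only at hc
      exact g2 (Fin.castLE hmn u) (mem_seg.mpr u.isLt) hc
    · intro z hz hc
      dsimp only at hz hc
      have hcast : Fin.castLE hmn ⟨(F (Fin.castLE hmn z)).val, hz⟩ = F (Fin.castLE hmn z) :=
        Fin.ext rfl
      rw [hcast] at hc
      exact g3 (Fin.castLE hmn z) (mem_seg.mpr z.isLt) (mem_seg.mpr hz) hc
  · intro f _
    funext u
    dsimp only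
    rw [dif_pos (show ((Fin.castLE hmn u) : Fin n).val < m from u.isLt)]
    exact congrArg f (Fin.ext rfl)
  · intro F hF
    obtain ⟨g1, -, -⟩ := mem_GP.mp hF
    funext u
    dsimp only
    by_cases h : u.val < m
    · rw [dif_pos h]
      exact congrArg F (Fin.ext rfl)
    · rw [dif_neg h]
      exact (g1 u (by simpa [mem_seg] using h)).symm

open Classical in
lemma good_card {m n : ℕ} (hmn : m ≤ n) :
    (((Finset.univ : Finset (Fin m → Fin n)).filter
      (fun f : Fin m → Fin n => GoodF hmn f)).card : ℤ) = Ifun m n := by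
  rw [← good_card_raw hmn]
  exact congrArg _ (congrArg Finset.card (Finset.filter_congr (fun f _ => Iff.rfl)))


open Classical in
/-- Proposition: the sum of the weights of the labellings of the complete graph
on `Fin n` with `k` symmetric and `ℓ+1` directed colours in which the last
directed colour defines an anti-involutive function `Fin m → Fin n` equals
`I(m,n) · y^m · L_{k,ℓ}(C(n,2) − m, w, x)`. -/
theorem weighted_labellings_antiInvol (m n k l : ℕ) (hmn : m ≤ n)
    (w : Fin k → ℚ) (x : Fin l → ℚ) (y : ℚ) :
    (∑ c ∈ Finset.univ.filter
        (fun c : Edge n → (Fin k ⊕ (Fin (l + 1) × Fin n)) =>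
          IsLabelling c ∧ DefinesAntiInvol hmn c),
      ∏ e : Edge n, Sum.elim w (fun qv => (Fin.snoc x y : Fin (l + 1) → ℚ) qv.1) (c e)) =
      (Ifun m n : ℚ) * y ^ m * Lkl k l (n.choose 2 - m) w x := by
  classical
  set W : ℚ := (∑ p, w p) + ∑ q : Fin l, 2 * x q with hW
  have hfilter : Finset.univ.filter (fun c : Edge n → (Fin k ⊕ (Fin (l + 1) × Fin n)) =>
        IsLabelling c ∧ DefinesAntiInvol hmn c)
      = (Finset.univ.filter (fun f : Fin m → Fin n => GoodF hmn f)).biUnion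
          (fun f => Finset.univ.filter
            (fun c : Edge n → (Fin k ⊕ (Fin (l + 1) × Fin n)) =>
              ∀ e, PCol hmn k l f e (c e))) := by
    ext c
    simp only [Finset.mem_filter, Finset.mem_univ, true_and, Finset.mem_biUnion]
    rw [decomp hmn c]
  have hdisj : (↑(Finset.univ.filter (fun f : Fin m → Fin n => GoodF hmn f)) :
      Set (Fin m → Fin n)).PairwiseDisjoint
      (fun f => Finset.univ.filter
            (fun c : Edge n → (Fin k ⊕ (Fin (l + 1) × Fin n)) =>
              ∀ e, PCol hmn k l f e (c e))) := by
    intro f hf f' hf' hne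
    rw [Finset.mem_coe, Finset.mem_filter] at hf hf'
    rw [Function.onFun, Finset.disjoint_left]
    intro c hc hc'
    rw [Finset.mem_filter] at hc hc'
    exact hne (uniqF hf.2 hc.2 hf'.2 hc'.2)
  rw [hfilter, Finset.sum_biUnion hdisj]
  have hper : ∀ f ∈ Finset.univ.filter (fun f : Fin m → Fin n => GoodF hmn f),
      (∑ c ∈ Finset.univ.filter
          (fun c : Edge n → (Fin k ⊕ (Fin (l + 1) × Fin n)) =>
            ∀ e, PCol hmn k l f e (c e)),
        ∏ e : Edge n, Sum.elim w
          (fun qv : Fin (l + 1) × Fin n => (Fin.snoc x y : Fin (l + 1) → ℚ) qv.1) (c e))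
      = y ^ m * W ^ (n.choose 2 - m) := by
    intro f hf
    rw [Finset.mem_filter] at hf
    have hGood := hf.2
    have hpi : Finset.univ.filter
        (fun c : Edge n → (Fin k ⊕ (Fin (l + 1) × Fin n)) =>
          ∀ e, PCol hmn k l f e (c e))
        = Fintype.piFinset (fun e : Edge n => Finset.univ.filter (PCol hmn k l f e)) := by
      ext c
      simp [Fintype.mem_piFinset]
    rw [hpi, ← Finset.prod_univ_sum]
    have hval : ∀ e : Edge n,
        (∑ a ∈ Finset.univ.filter (PCol hmn k l f e),
          Sum.elim w (fun qv : Fin (l + 1) × Fin n =>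
            (Fin.snoc x y : Fin (l + 1) → ℚ) qv.1) a)
        = if InEf hmn f e then y else W := by
      intro e
      by_cases hin : InEf hmn f e
      · obtain ⟨u0, he⟩ := hin
        rw [if_pos ⟨u0, he⟩, filter_PCol_inEf hGood u0 e he, Finset.sum_singleton]
        show (Fin.snoc x y : Fin (l + 1) → ℚ) (Fin.last l) = y
        rw [Fin.snoc_last]
      · rw [if_neg hin, hW]
        exact sum_wt_notInEf w x y hin
    rw [Finset.prod_congr rfl (fun e _ => hval e), Finset.prod_ite, Finset.prod_const,
      Finset.prod_const, card_InEf hGood]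
    congr 2
    have := Finset.card_filter_add_card_filter_not
      (s := (Finset.univ : Finset (Edge n))) (p := fun e => InEf hmn f e)
    rw [card_InEf hGood, Finset.card_univ, card_edge n] at this
    beta_reduce at this
    omega
  rw [Finset.sum_congr rfl hper, Finset.sum_const, nsmul_eq_mul]
  have hcard : ((Finset.univ.filter (fun f : Fin m → Fin n => GoodF hmn f)).card : ℚ)
      = ((Ifun m n : ℤ) : ℚ) := by
    have := good_card hmn
    exact_mod_cast congrArg (Int.cast : ℤ → ℚ) this
  rw [hcard, hW, lkl_eq]
  ring
end

section
/- Let A and B be disjoint nonempty finite sets with |A| = M and |B| = N, and let A_m ⊆ A and B_n ⊆ B be subsets with |A_m| = m and |B_n| = n. Then the number of pairs of functions (f : A_m → B, g : B_n → A) that are nowhere inverses of each other equals, as an integer, K(m,M,n,N) := ∑_{i=0}^{min(m,n)} (−1)^i · C(m,i) · C(n,i) · (i! · M^{n−i} · N^{m−i}). -/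
open Finset

namespace NInvAux

variable {U V : Type*}

/-- A finite set of pairs is a (partial) matching if both coordinates are injective on it. -/
def IsMatching (S : Finset (U × V)) : Prop :=
  (∀ q ∈ S, ∀ q' ∈ S, q.1 = q'.1 → q = q') ∧ (∀ q ∈ S, ∀ q' ∈ S, q.2 = q'.2 → q = q')

section DecU

variable [DecidableEq U]

lemma exists_snd {S : Finset (U × V)} {u : U} (hu : u ∈ S.image Prod.fst) :
    ∃ v, (u, v) ∈ S := by
  rw [Finset.mem_image] at hu
  obtain ⟨q, hq, h⟩ := hu
  exact ⟨q.2, by rw [← h]; simpa using hq⟩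

noncomputable def mfun (S : Finset (U × V)) (u : {x // x ∈ S.image Prod.fst}) : V :=
  Classical.choose (exists_snd u.2)

lemma mfun_mem (S : Finset (U × V)) (u : {x // x ∈ S.image Prod.fst}) :
    (u.1, mfun S u) ∈ S :=
  Classical.choose_spec (exists_snd u.2)

lemma mfun_eq {S : Finset (U × V)} (hS : IsMatching S) {q : U × V} (hq : q ∈ S)
    (hu : q.1 ∈ S.image Prod.fst) : mfun S ⟨q.1, hu⟩ = q.2 := by
  have h1 := mfun_mem S ⟨q.1, hu⟩
  have h2 := hS.1 _ h1 _ hq rfl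
  exact congrArg Prod.snd h2

instance [DecidableEq V] (S : Finset (U × V)) : Decidable (IsMatching S) := by
  unfold IsMatching; exact inferInstance

lemma card_image_fst {S : Finset (U × V)} (hS : IsMatching S) :
    (S.image Prod.fst).card = S.card :=
  Finset.card_image_of_injOn (fun q hq q' hq' h => hS.1 q hq q' hq' h)

lemma card_image_snd [DecidableEq V] {S : Finset (U × V)} (hS : IsMatching S) :
    (S.image Prod.snd).card = S.card :=
  Finset.card_image_of_injOn (fun q hq q' hq' h => hS.2 q hq q' hq' h)

noncomputable def fiberEquiv [DecidableEq V] (T : Finset U) :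
    {S : Finset (U × V) // IsMatching S ∧ S.image Prod.fst = T} ≃ ({x // x ∈ T} ↪ V) where
  toFun S := ⟨fun u => mfun S.1 ⟨u.1, by rw [S.2.2]; exact u.2⟩, by
    intro u u' h
    have hu : (u.1 : U) ∈ S.1.image Prod.fst := by rw [S.2.2]; exact u.2
    have hu' : (u'.1 : U) ∈ S.1.image Prod.fst := by rw [S.2.2]; exact u'.2
    have h' : mfun S.1 ⟨u.1, hu⟩ = mfun S.1 ⟨u'.1, hu'⟩ := h
    have h1 := mfun_mem S.1 ⟨u.1, hu⟩
    have h2 := mfun_mem S.1 ⟨u'.1, hu'⟩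
    rw [h'] at h1
    have h3 := S.2.1.2 _ h1 _ h2 rfl
    exact Subtype.ext (congrArg Prod.fst h3)⟩
  invFun e := ⟨T.attach.image (fun u => (u.1, e u)), by
    refine ⟨⟨?_, ?_⟩, ?_⟩
    · simp only [Finset.forall_mem_image]
      intro u _ u' _ h
      have : u = u' := Subtype.ext h
      rw [this]
    · simp only [Finset.forall_mem_image]
      intro u _ u' _ h
      have : u = u' := e.injective h
      rw [this]
    · rw [Finset.image_image]
      exact Finset.attach_image_val⟩
  left_inv S := by
    apply Subtype.ext
    dsimp only
    ext q
    simp only [Finset.mem_image, Finset.mem_attach, true_and]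
    constructor
    · rintro ⟨u, rfl⟩
      exact mfun_mem S.1 ⟨u.1, by rw [S.2.2]; exact u.2⟩
    · intro hq
      have hu : q.1 ∈ T := by rw [← S.2.2]; exact Finset.mem_image_of_mem _ hq
      refine ⟨⟨q.1, hu⟩, ?_⟩
      have h := mfun_eq S.2.1 hq (by rw [S.2.2]; exact hu)
      exact Prod.ext rfl h
  right_inv e := by
    ext u
    dsimp only
    have hm := mfun_mem (T.attach.image (fun u => (u.1, e u)))
      ⟨u.1, by rw [Finset.image_image]; simpa using Finset.mem_image_of_mem _ (Finset.mem_attach T u)⟩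
    rw [Finset.mem_image] at hm
    obtain ⟨u', -, h⟩ := hm
    have h1 : u' = u := Subtype.ext (congrArg Prod.fst h)
    subst h1
    exact (congrArg Prod.snd h).symm

lemma card_matchings [Fintype U] [Fintype V] [DecidableEq V] (i : ℕ) :
    ((univ : Finset (Finset (U × V))).filter (fun S => IsMatching S ∧ S.card = i)).card
      = (Fintype.card U).choose i * (Fintype.card V).descFactorial i := by
  classical
  have hmap : ∀ S ∈ (univ : Finset (Finset (U × V))).filter (fun S => IsMatching S ∧ S.card = i),
      S.image Prod.fst ∈ Finset.powersetCard i (Finset.univ : Finset U) := by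
    intro S hS
    rw [Finset.mem_filter] at hS
    rw [Finset.mem_powersetCard_univ, card_image_fst hS.2.1, hS.2.2]
  rw [Finset.card_eq_sum_card_fiberwise hmap]
  have hfib : ∀ T ∈ Finset.powersetCard i (Finset.univ : Finset U),
      (((univ : Finset (Finset (U × V))).filter (fun S => IsMatching S ∧ S.card = i)).filter
        (fun S => S.image Prod.fst = T)).card = (Fintype.card V).descFactorial i := by
    intro T hT
    rw [Finset.mem_powersetCard_univ] at hT
    rw [Finset.filter_filter]
    have hiff : ∀ S ∈ (univ : Finset (Finset (U × V))),
        ((IsMatching S ∧ S.card = i) ∧ S.image Prod.fst = T)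
          ↔ (IsMatching S ∧ S.image Prod.fst = T) := by
      intro S _
      constructor
      · rintro ⟨⟨h1, _⟩, h3⟩; exact ⟨h1, h3⟩
      · rintro ⟨h1, h3⟩
        exact ⟨⟨h1, by rw [← card_image_fst h1, h3, hT]⟩, h3⟩
    rw [Finset.filter_congr hiff, ← Fintype.card_subtype,
      Fintype.card_congr (fiberEquiv T), Fintype.card_embedding_eq, Fintype.card_coe, hT]
  rw [Finset.sum_congr rfl hfib, Finset.sum_const, Finset.card_powersetCard,
    Finset.card_univ, smul_eq_mul]

lemma card_extend {W : Type*} [Fintype U] [Fintype W] [DecidableEq W] (T : Finset U) (ψ : U → W) :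
    ((univ : Finset (U → W)).filter (fun f => ∀ u ∈ T, f u = ψ u)).card
      = Fintype.card W ^ (Fintype.card U - T.card) := by
  classical
  rw [← Fintype.card_subtype]
  have e : {f : U → W // ∀ u ∈ T, f u = ψ u} ≃ ({u // u ∈ Tᶜ} → W) :=
    { toFun := fun f u => f.1 u.1
      invFun := fun h => ⟨fun u => if hu : u ∈ T then ψ u else h ⟨u, by simpa using hu⟩,
        fun u hu => dif_pos hu⟩
      left_inv := by
        rintro ⟨f, hf⟩
        apply Subtype.ext
        funext u
        by_cases hu : u ∈ T
        · simp [hu, hf u hu]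
        · simp [hu]
      right_inv := by
        intro h
        funext u
        have hu : u.1 ∉ T := Finset.mem_compl.1 u.2
        simp [hu] }
  rw [Fintype.card_congr e, Fintype.card_fun, Fintype.card_coe, Finset.card_compl]

lemma card_prescribed {W : Type*} [Fintype U] [Fintype W] [DecidableEq W] [Nonempty W]
    {S : Finset (U × V)} (hS : IsMatching S) (ι : V → W) :
    ((univ : Finset (U → W)).filter (fun f => ∀ q ∈ S, f q.1 = ι q.2)).card
      = Fintype.card W ^ (Fintype.card U - S.card) := by
  classical
  set T := S.image Prod.fst with hTdef
  set ψ : U → W := fun u => if hu : u ∈ T then ι (mfun S ⟨u, hu⟩) else Classical.arbitrary W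
    with hψ
  have hiff : ∀ f ∈ (univ : Finset (U → W)),
      (∀ q ∈ S, f q.1 = ι q.2) ↔ (∀ u ∈ T, f u = ψ u) := by
    intro f _
    constructor
    · intro h u hu
      rw [hψ]
      dsimp only
      rw [dif_pos hu]
      exact h _ (mfun_mem S ⟨u, hu⟩)
    · intro h q hq
      have hu : q.1 ∈ T := Finset.mem_image_of_mem _ hq
      have h2 := h q.1 hu
      rw [hψ] at h2
      dsimp only at h2
      rw [dif_pos hu, mfun_eq hS hq hu] at h2
      exact h2
  rw [Finset.filter_congr hiff, card_extend, hTdef, card_image_fst hS]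

lemma filter_prescribed_eq_empty {W : Type*} [Fintype U] [Fintype W] [DecidableEq W]
    {S : Finset (U × V)} {ι : V → W} (hι : Function.Injective ι)
    (hbad : ¬ ∀ q ∈ S, ∀ q' ∈ S, q.1 = q'.1 → q = q') :
    ((univ : Finset (U → W)).filter (fun f => ∀ q ∈ S, f q.1 = ι q.2)) = ∅ := by
  classical
  push_neg at hbad
  obtain ⟨q, hq, q', hq', h1, hne⟩ := hbad
  rw [Finset.filter_eq_empty_iff]
  intro f _ hf
  have hv : ι q.2 = ι q'.2 := by
    rw [← hf q hq, ← hf q' hq', h1]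
  exact hne (Prod.ext h1 (hι hv))

end DecU

lemma isMatching_swap [DecidableEq U] [DecidableEq V] {S : Finset (U × V)} (hS : IsMatching S) :
    IsMatching (S.image Prod.swap) := by
  constructor
  · simp only [Finset.forall_mem_image]
    intro q hq q' hq' h
    have : q = q' := hS.2 q hq q' hq' h
    rw [this]
  · simp only [Finset.forall_mem_image]
    intro q hq q' hq' h
    have : q = q' := hS.1 q hq q' hq' h
    rw [this]

lemma swap_bad [DecidableEq U] [DecidableEq V] {S : Finset (U × V)}
    (h : ¬ ∀ q ∈ S, ∀ q' ∈ S, q.2 = q'.2 → q = q') :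
    ¬ ∀ r ∈ S.image Prod.swap, ∀ r' ∈ S.image Prod.swap, r.1 = r'.1 → r = r' := by
  intro hc
  apply h
  intro q hq q' hq' h2
  have := hc _ (Finset.mem_image_of_mem _ hq) _ (Finset.mem_image_of_mem _ hq') h2
  exact Prod.swap_injective this

lemma card_filter_congr2 {β : Type*} [Fintype β] {p q : β → Prop}
    (ip : DecidablePred p) (iq : DecidablePred q) (h : ∀ x, p x ↔ q x) :
    (@Finset.filter β p ip Finset.univ).card = (@Finset.filter β q iq Finset.univ).card := by
  have he : (@Finset.filter β p ip Finset.univ) = (@Finset.filter β q iq Finset.univ) := by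
    ext x
    simp only [Finset.mem_filter]
    exact and_congr_right (fun _ => h x)
  rw [he]

end NInvAux

/-- Two functions `f : A_m → B` and `g : B_n → A` (with `A_m ⊆ A`, `B_n ⊆ B`)
are nowhere inverses of each other: `g (f u) ≠ u` whenever defined, and
`f (g v) ≠ v` whenever defined. -/
def NowhereInverses {α : Type*} {A B : Finset α} (Am Bn : Finset α)
    (f : {a // a ∈ Am} → {b // b ∈ B}) (g : {b // b ∈ Bn} → {a // a ∈ A}) : Prop :=
  (∀ (u : {a // a ∈ Am}) (h : (f u).1 ∈ Bn), (g ⟨(f u).1, h⟩).1 ≠ u.1) ∧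
  (∀ (v : {b // b ∈ Bn}) (h : (g v).1 ∈ Am), (f ⟨(g v).1, h⟩).1 ≠ v.1)

/-- `K(m,M,n,N) = ∑_{i=0}^{min(m,n)} (−1)^i C(m,i) C(n,i) (i! · M^{n−i} · N^{m−i})`. -/
def Kfun (m M n N : ℕ) : ℤ :=
  ∑ i ∈ Finset.range (min m n + 1),
    (-1 : ℤ) ^ i * (m.choose i : ℤ) * (n.choose i : ℤ) *
      ((i.factorial : ℤ) * (M : ℤ) ^ (n - i) * (N : ℤ) ^ (m - i))

open NInvAux

set_option maxHeartbeats 1000000 in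
/-- The number of pairs of functions `(f : A_m → B, g : B_n → A)` that are
nowhere inverses of each other equals `K(m,M,n,N)`. -/
theorem card_nowhereInverses {α : Type*} (A B Am Bn : Finset α) (M N m n : ℕ)
    (hA : A.Nonempty) (hB : B.Nonempty) (hdisj : Disjoint A B)
    (hAcard : A.card = M) (hBcard : B.card = N)
    (hAm : Am ⊆ A) (hBn : Bn ⊆ B) (hm : Am.card = m) (hn : Bn.card = n) :
    (Nat.card {p : ({a // a ∈ Am} → {b // b ∈ B}) × ({b // b ∈ Bn} → {a // a ∈ A}) //
        NowhereInverses Am Bn p.1 p.2} : ℤ) = Kfun m M n N := by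
  letI : DecidableEq α := Classical.decEq α
  subst hAcard hBcard hm hn
  haveI hBne : Nonempty {b // b ∈ B} := ⟨⟨hB.choose, hB.choose_spec⟩⟩
  haveI hAne : Nonempty {a // a ∈ A} := ⟨⟨hA.choose, hA.choose_spec⟩⟩
  haveI : DecidablePred (fun p : ({a // a ∈ Am} → {b // b ∈ B}) × ({b // b ∈ Bn} → {a // a ∈ A})
      => NowhereInverses Am Bn p.1 p.2) := fun p => Classical.dec _
  set ιB : {b // b ∈ Bn} → {b // b ∈ B} := fun v => ⟨v.1, hBn v.2⟩ with hιB
  set ιA : {a // a ∈ Am} → {a // a ∈ A} := fun u => ⟨u.1, hAm u.2⟩ with hιA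
  have hιBinj : Function.Injective ιB := by
    intro v v' h
    have h2 : (ιB v).1 = (ιB v').1 := congrArg Subtype.val h
    exact Subtype.ext h2
  have hιAinj : Function.Injective ιA := by
    intro u u' h
    have h2 : (ιA u).1 = (ιA u').1 := congrArg Subtype.val h
    exact Subtype.ext h2
  set matched : (({a // a ∈ Am} → {b // b ∈ B}) × ({b // b ∈ Bn} → {a // a ∈ A}))
      → Finset ({a // a ∈ Am} × {b // b ∈ Bn}) :=
    fun p => Finset.univ.filter (fun q => p.1 q.1 = ιB q.2 ∧ p.2 q.2 = ιA q.1) with hmatched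
  -- Step 0: reduce Nat.card to a filter card
  have key : ∀ p : ({a // a ∈ Am} → {b // b ∈ B}) × ({b // b ∈ Bn} → {a // a ∈ A}),
      NowhereInverses Am Bn p.1 p.2 ↔ matched p = ∅ := by
    intro p
    rw [hmatched]
    dsimp only
    rw [Finset.filter_eq_empty_iff]
    constructor
    · rintro ⟨h1, h2⟩ q - ⟨hfv, hgu⟩
      have hveq : (p.1 q.1).1 = q.2.1 := by rw [hfv]
      have hmem : (p.1 q.1).1 ∈ Bn := by rw [hveq]; exact q.2.2
      apply h1 q.1 hmem
      have hvv : (⟨(p.1 q.1).1, hmem⟩ : {b // b ∈ Bn}) = q.2 := Subtype.ext hveq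
      rw [hvv, hgu]
    · intro hemp
      constructor
      · intro u h heq
        exact hemp (x := (u, ⟨(p.1 u).1, h⟩)) (Finset.mem_univ _) ⟨Subtype.ext rfl, Subtype.ext heq⟩
      · intro v h heq
        exact hemp (x := (⟨(p.2 v).1, h⟩, v)) (Finset.mem_univ _) ⟨Subtype.ext heq, Subtype.ext rfl⟩
  have h0 : (Nat.card {p : ({a // a ∈ Am} → {b // b ∈ B}) × ({b // b ∈ Bn} → {a // a ∈ A}) //
        NowhereInverses Am Bn p.1 p.2})
      = (Finset.univ.filter (fun p : ({a // a ∈ Am} → {b // b ∈ B}) ×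
          ({b // b ∈ Bn} → {a // a ∈ A}) => matched p = ∅)).card := by
    rw [Nat.card_eq_fintype_card, Fintype.card_subtype]
    congr 1
    exact Finset.filter_congr (fun p _ => key p)
  -- Step 1: counting pairs extending a given S
  have key2 : ∀ S : Finset ({a // a ∈ Am} × {b // b ∈ Bn}),
      (Finset.univ.filter (fun p : ({a // a ∈ Am} → {b // b ∈ B}) ×
          ({b // b ∈ Bn} → {a // a ∈ A}) => S ⊆ matched p)).card
        = if IsMatching S then B.card ^ (Am.card - S.card) * A.card ^ (Bn.card - S.card)
          else 0 := by
    intro S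
    have hswapiff : ∀ g : {b // b ∈ Bn} → {a // a ∈ A},
        (∀ q ∈ S, g q.2 = ιA q.1) ↔ (∀ r ∈ S.image Prod.swap, g r.1 = ιA r.2) := by
      intro g
      rw [Finset.forall_mem_image]
      exact Iff.rfl
    have hprod : (Finset.univ.filter (fun p : ({a // a ∈ Am} → {b // b ∈ B}) ×
          ({b // b ∈ Bn} → {a // a ∈ A}) => S ⊆ matched p))
        = ((Finset.univ.filter (fun f : {a // a ∈ Am} → {b // b ∈ B}
              => ∀ q ∈ S, f q.1 = ιB q.2)) ×ˢ
           (Finset.univ.filter (fun g : {b // b ∈ Bn} → {a // a ∈ A}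
              => ∀ q ∈ S, g q.2 = ιA q.1))) := by
      ext p
      rw [Finset.mem_filter, Finset.mem_product, Finset.mem_filter, Finset.mem_filter]
      simp only [Finset.mem_univ, true_and]
      constructor
      · intro h
        constructor
        · intro q hq; exact ((Finset.mem_filter.1 (h hq)).2).1
        · intro q hq; exact ((Finset.mem_filter.1 (h hq)).2).2
      · rintro ⟨h1, h2⟩ q hq
        exact Finset.mem_filter.2 ⟨Finset.mem_univ _, h1 q hq, h2 q hq⟩
    rw [hprod, Finset.card_product]
    by_cases hmatch : IsMatching S
    · rw [if_pos hmatch]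
      have hf := card_prescribed (W := {b // b ∈ B}) hmatch ιB
      rw [Fintype.card_coe, Fintype.card_coe] at hf
      have hg := card_prescribed (W := {a // a ∈ A}) (isMatching_swap hmatch) ιA
      rw [Fintype.card_coe, Fintype.card_coe,
        Finset.card_image_of_injective _ Prod.swap_injective] at hg
      refine congrArg₂ (· * ·) (Eq.trans ?_ hf) (Eq.trans ?_ hg)
      · exact card_filter_congr2 _ _ (fun f => Iff.rfl)
      · exact card_filter_congr2 _ _ hswapiff
    · rw [if_neg hmatch]
      rcases not_and_or.1 hmatch with hbad | hbad
      · have h1 := Finset.card_eq_zero.2 (filter_prescribed_eq_empty (V := {b // b ∈ Bn})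
          hιBinj hbad)
        rw [Nat.mul_eq_zero]
        refine Or.inl (Eq.trans ?_ h1)
        exact card_filter_congr2 _ _ (fun f => Iff.rfl)
      · have h2 := Finset.card_eq_zero.2 (filter_prescribed_eq_empty (V := {a // a ∈ Am})
          hιAinj (swap_bad hbad))
        rw [Nat.mul_eq_zero]
        refine Or.inr (Eq.trans ?_ h2)
        exact card_filter_congr2 _ _ hswapiff
  -- bounds on matching cardinality
  have hbound : ∀ S : Finset ({a // a ∈ Am} × {b // b ∈ Bn}), IsMatching S →
      S.card ∈ Finset.range (min Am.card Bn.card + 1) := by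
    intro S hS
    rw [Finset.mem_range, Nat.lt_succ_iff, le_min_iff]
    constructor
    · calc S.card = (S.image Prod.fst).card := (card_image_fst hS).symm
        _ ≤ Fintype.card {a // a ∈ Am} := Finset.card_le_univ _
        _ = Am.card := Fintype.card_coe _
    · calc S.card = (S.image Prod.snd).card := (card_image_snd hS).symm
        _ ≤ Fintype.card {b // b ∈ Bn} := Finset.card_le_univ _
        _ = Bn.card := Fintype.card_coe _
  -- the grand computation
  rw [h0]
  calc ((Finset.univ.filter (fun p : ({a // a ∈ Am} → {b // b ∈ B}) ×
          ({b // b ∈ Bn} → {a // a ∈ A}) => matched p = ∅)).card : ℤ)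
      = ∑ p ∈ (Finset.univ : Finset (({a // a ∈ Am} → {b // b ∈ B}) ×
          ({b // b ∈ Bn} → {a // a ∈ A}))), (if matched p = ∅ then (1 : ℤ) else 0) := by
        rw [Finset.card_filter]
        push_cast
        rfl
    _ = ∑ p ∈ Finset.univ, ∑ T ∈ (matched p).powerset, (-1 : ℤ) ^ T.card := by
        refine Finset.sum_congr rfl fun p _ => ?_
        rw [Finset.sum_powerset_neg_one_pow_card]
    _ = ∑ p ∈ Finset.univ, ∑ S ∈ (Finset.univ : Finset (Finset ({a // a ∈ Am} × {b // b ∈ Bn}))),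
          (if S ⊆ matched p then (-1 : ℤ) ^ S.card else 0) := by
        refine Finset.sum_congr rfl fun p _ => ?_
        rw [← Finset.sum_filter]
        congr 1
        ext S
        simp [Finset.mem_powerset]
    _ = ∑ S ∈ (Finset.univ : Finset (Finset ({a // a ∈ Am} × {b // b ∈ Bn}))),
          ∑ p ∈ Finset.univ, (if S ⊆ matched p then (-1 : ℤ) ^ S.card else 0) :=
        Finset.sum_comm
    _ = ∑ S ∈ (Finset.univ : Finset (Finset ({a // a ∈ Am} × {b // b ∈ Bn}))),
          (-1 : ℤ) ^ S.card * ((Finset.univ.filter (fun p : ({a // a ∈ Am} → {b // b ∈ B}) ×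
            ({b // b ∈ Bn} → {a // a ∈ A}) => S ⊆ matched p)).card : ℤ) := by
        refine Finset.sum_congr rfl fun S _ => ?_
        rw [← Finset.sum_filter, Finset.sum_const, nsmul_eq_mul, mul_comm]
    _ = ∑ S ∈ (Finset.univ : Finset (Finset ({a // a ∈ Am} × {b // b ∈ Bn}))),
          (if IsMatching S then (-1 : ℤ) ^ S.card *
            ((B.card : ℤ) ^ (Am.card - S.card) * (A.card : ℤ) ^ (Bn.card - S.card)) else 0) := by
        refine Finset.sum_congr rfl fun S _ => ?_
        rw [key2 S]
        split_ifs with h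
        · push_cast
          ring
        · simp
    _ = ∑ S ∈ (Finset.univ : Finset (Finset ({a // a ∈ Am} × {b // b ∈ Bn}))).filter IsMatching,
          (-1 : ℤ) ^ S.card *
            ((B.card : ℤ) ^ (Am.card - S.card) * (A.card : ℤ) ^ (Bn.card - S.card)) := by
        rw [Finset.sum_filter]
    _ = ∑ i ∈ Finset.range (min Am.card Bn.card + 1),
          ∑ S ∈ ((Finset.univ : Finset (Finset ({a // a ∈ Am} × {b // b ∈ Bn}))).filter
              IsMatching).filter (fun S => S.card = i),
          (-1 : ℤ) ^ S.card *
            ((B.card : ℤ) ^ (Am.card - S.card) * (A.card : ℤ) ^ (Bn.card - S.card)) := by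
        rw [Finset.sum_fiberwise_of_maps_to (fun S hS => hbound S (Finset.mem_filter.1 hS).2)]
    _ = ∑ i ∈ Finset.range (min Am.card Bn.card + 1),
          ((Am.card.choose i * Bn.card.descFactorial i : ℕ) : ℤ) *
            ((-1 : ℤ) ^ i *
              ((B.card : ℤ) ^ (Am.card - i) * (A.card : ℤ) ^ (Bn.card - i))) := by
        refine Finset.sum_congr rfl fun i _ => ?_
        have hconst : ∀ S ∈ ((Finset.univ : Finset (Finset ({a // a ∈ Am} × {b // b ∈ Bn}))).filter
              IsMatching).filter (fun S => S.card = i),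
            (-1 : ℤ) ^ S.card *
              ((B.card : ℤ) ^ (Am.card - S.card) * (A.card : ℤ) ^ (Bn.card - S.card))
            = (-1 : ℤ) ^ i *
              ((B.card : ℤ) ^ (Am.card - i) * (A.card : ℤ) ^ (Bn.card - i)) := by
          intro S hS
          rw [(Finset.mem_filter.1 hS).2]
        rw [Finset.sum_congr rfl hconst, Finset.sum_const, nsmul_eq_mul]
        have hcm := card_matchings (U := {a // a ∈ Am}) (V := {b // b ∈ Bn}) i
        rw [Fintype.card_coe, Fintype.card_coe] at hcm
        have hcm2 : (((Finset.univ : Finset (Finset ({a // a ∈ Am} × {b // b ∈ Bn}))).filter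
              IsMatching).filter (fun S => S.card = i)).card
            = Am.card.choose i * Bn.card.descFactorial i := by
          rw [Finset.filter_filter]
          refine Eq.trans ?_ hcm
          exact card_filter_congr2 _ _ (fun S => Iff.rfl)
        rw [hcm2]
    _ = Kfun Am.card A.card Bn.card B.card := by
        unfold Kfun
        refine Finset.sum_congr rfl fun i _ => ?_
        rw [Nat.descFactorial_eq_factorial_mul_choose]
        push_cast
        ring
end

section
/- Let A and B be disjoint finite sets with |A| = M and |B| = N, let A_m ⊆ A and B_n ⊆ B be subsets with |A_m| = m and |B_n| = n, and let i ≤ min(m,n). Then the number of quadruples (f, g, A', B'), where f : A_m → B and g : B_n → A are functions, A' ⊆ A_m and B' ⊆ B_n are subsets with |A'| = |B'| = i, f maps A' bijectively onto B', g maps B' bijectively onto A', and g(f(u)) = u for every u ∈ A' (so the restrictions f↾A' and g↾B' are mutually inverse bijections), equals C(m,i) · C(n,i) · i! · M^{n−i} · N^{m−i}. -/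
/-- The predicate describing the quadruples `(f, g, A', B')` counted in the
inclusion–exclusion step: `A' ⊆ A_m` and `B' ⊆ B_n` have cardinality `i`,
`f` maps `A'` bijectively onto `B'`, `g` maps `B'` bijectively onto `A'`,
and `g (f u) = u` for every `u ∈ A'`. -/
def GoodQuadruple {α : Type*} {A B : Finset α} (Am Bn : Finset α) (i : ℕ)
    (f : {a // a ∈ Am} → {b // b ∈ B}) (g : {b // b ∈ Bn} → {a // a ∈ A})
    (A' B' : Finset α) : Prop :=
  A' ⊆ Am ∧ B' ⊆ Bn ∧ A'.card = i ∧ B'.card = i ∧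
  -- `f` maps `A'` bijectively onto `B'`:
  (∀ a : {a // a ∈ Am}, a.1 ∈ A' → (f a).1 ∈ B') ∧
  (∀ a a' : {a // a ∈ Am}, a.1 ∈ A' → a'.1 ∈ A' → f a = f a' → a = a') ∧
  (∀ b ∈ B', ∃ a : {a // a ∈ Am}, a.1 ∈ A' ∧ (f a).1 = b) ∧
  -- `g` maps `B'` bijectively onto `A'`:
  (∀ b : {b // b ∈ Bn}, b.1 ∈ B' → (g b).1 ∈ A') ∧
  (∀ b b' : {b // b ∈ Bn}, b.1 ∈ B' → b'.1 ∈ B' → g b = g b' → b = b') ∧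
  (∀ a ∈ A', ∃ b : {b // b ∈ Bn}, b.1 ∈ B' ∧ (g b).1 = a) ∧
  -- `g ∘ f = id` on `A'`:
  (∀ (a : {a // a ∈ Am}) (b : {b // b ∈ Bn}), a.1 ∈ A' → (f a).1 = b.1 → (g b).1 = a.1)

open Classical Finset

noncomputable section AuxGQ

variable {α : Type*}

/-- Structured data equivalent to a good quadruple. -/
def QT (A B Am Bn : Finset α) (i : ℕ) : Type _ :=
  Σ A' : {S : Finset α // S ∈ Am.powersetCard i},
  Σ B' : {S : Finset α // S ∈ Bn.powersetCard i},
    ({x : α // x ∈ A'.1} ≃ {y : α // y ∈ B'.1}) ×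
    ({a : α // a ∈ Am \ A'.1} → {b : α // b ∈ B}) ×
    ({b : α // b ∈ Bn \ B'.1} → {a : α // a ∈ A})

variable {A B Am Bn : Finset α} {i : ℕ}

def Fmap (hAm : Am ⊆ A) (hBn : Bn ⊆ B) (x : QT A B Am Bn i) :
    ({a // a ∈ Am} → {b // b ∈ B}) × ({b // b ∈ Bn} → {a // a ∈ A}) × Finset α × Finset α :=
  ⟨fun a => if h : a.1 ∈ x.1.1 then
      ⟨(x.2.2.1 ⟨a.1, h⟩).1, hBn ((Finset.mem_powersetCard.mp x.2.1.2).1 (x.2.2.1 ⟨a.1, h⟩).2)⟩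
    else x.2.2.2.1 ⟨a.1, Finset.mem_sdiff.mpr ⟨a.2, h⟩⟩,
   fun b => if h : b.1 ∈ x.2.1.1 then
      ⟨(x.2.2.1.symm ⟨b.1, h⟩).1, hAm ((Finset.mem_powersetCard.mp x.1.2).1 (x.2.2.1.symm ⟨b.1, h⟩).2)⟩
    else x.2.2.2.2 ⟨b.1, Finset.mem_sdiff.mpr ⟨b.2, h⟩⟩,
   x.1.1, x.2.1.1⟩

theorem Fmap_good (hAm : Am ⊆ A) (hBn : Bn ⊆ B) (x : QT A B Am Bn i) :
    GoodQuadruple Am Bn i (Fmap hAm hBn x).1 (Fmap hAm hBn x).2.1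
      (Fmap hAm hBn x).2.2.1 (Fmap hAm hBn x).2.2.2 := by
  obtain ⟨⟨A', hA'⟩, ⟨B', hB'⟩, e, f0, g0⟩ := x
  obtain ⟨hA'sub, hA'card⟩ := Finset.mem_powersetCard.mp hA'
  obtain ⟨hB'sub, hB'card⟩ := Finset.mem_powersetCard.mp hB'
  simp only [GoodQuadruple, Fmap]
  refine ⟨hA'sub, hB'sub, hA'card, hB'card, ?_, ?_, ?_, ?_, ?_, ?_, ?_⟩
  · intro a ha
    rw [dif_pos ha]
    exact (e ⟨a.1, ha⟩).2
  · intro a a' ha ha' hfe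
    rw [dif_pos ha, dif_pos ha'] at hfe
    have h1 := congrArg Subtype.val hfe
    have h2 : e ⟨a.1, ha⟩ = e ⟨a'.1, ha'⟩ := Subtype.ext h1
    have h3 := e.injective h2
    have h4 := congrArg Subtype.val h3
    exact Subtype.ext h4
  · intro b hb
    refine ⟨⟨(e.symm ⟨b, hb⟩).1, hA'sub (e.symm ⟨b, hb⟩).2⟩, (e.symm ⟨b, hb⟩).2, ?_⟩
    rw [dif_pos (e.symm ⟨b, hb⟩).2]
    exact congrArg Subtype.val (e.apply_symm_apply ⟨b, hb⟩)
  · intro b hb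
    rw [dif_pos hb]
    exact (e.symm ⟨b.1, hb⟩).2
  · intro b b' hb hb' hge
    rw [dif_pos hb, dif_pos hb'] at hge
    have h1 := congrArg Subtype.val hge
    have h2 : e.symm ⟨b.1, hb⟩ = e.symm ⟨b'.1, hb'⟩ := Subtype.ext h1
    have h3 := e.symm.injective h2
    have h4 := congrArg Subtype.val h3
    exact Subtype.ext h4
  · intro a ha
    refine ⟨⟨(e ⟨a, ha⟩).1, hB'sub (e ⟨a, ha⟩).2⟩, (e ⟨a, ha⟩).2, ?_⟩
    rw [dif_pos (e ⟨a, ha⟩).2]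
    exact congrArg Subtype.val (e.symm_apply_apply ⟨a, ha⟩)
  · intro a b ha hfb
    rw [dif_pos ha] at hfb
    have hb : b.1 ∈ B' := hfb ▸ (e ⟨a.1, ha⟩).2
    rw [dif_pos hb]
    have h1 : (⟨b.1, hb⟩ : {y : α // y ∈ B'}) = e ⟨a.1, ha⟩ := Subtype.ext hfb.symm
    exact congrArg Subtype.val ((congrArg e.symm h1).trans (e.symm_apply_apply ⟨a.1, ha⟩))

def FmapS (hAm : Am ⊆ A) (hBn : Bn ⊆ B) (x : QT A B Am Bn i) :
    {q : ({a // a ∈ Am} → {b // b ∈ B}) × ({b // b ∈ Bn} → {a // a ∈ A})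
          × Finset α × Finset α //
        GoodQuadruple Am Bn i q.1 q.2.1 q.2.2.1 q.2.2.2} :=
  ⟨Fmap hAm hBn x, Fmap_good hAm hBn x⟩

theorem FmapS_bijective (hAm : Am ⊆ A) (hBn : Bn ⊆ B) :
    Function.Bijective (FmapS (A := A) (B := B) (Am := Am) (Bn := Bn) (i := i) hAm hBn) := by
  constructor
  · rintro ⟨⟨A1, hA1⟩, ⟨B1, hB1⟩, e1, f1, g1⟩ ⟨⟨A2, hA2⟩, ⟨B2, hB2⟩, e2, f2, g2⟩ h
    have h' : Fmap hAm hBn ⟨⟨A1, hA1⟩, ⟨B1, hB1⟩, e1, f1, g1⟩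
        = Fmap hAm hBn ⟨⟨A2, hA2⟩, ⟨B2, hB2⟩, e2, f2, g2⟩ := congrArg Subtype.val h
    have hA : A1 = A2 := congrArg (fun q => q.2.2.1) h'
    subst hA
    have hB : B1 = B2 := congrArg (fun q => q.2.2.2) h'
    subst hB
    have hf : (Fmap hAm hBn ⟨⟨A1, hA1⟩, ⟨B1, hB1⟩, e1, f1, g1⟩).1
        = (Fmap hAm hBn ⟨⟨A1, hA1⟩, ⟨B1, hB1⟩, e2, f2, g2⟩).1 := by
      rw [h']
    have hg : (Fmap hAm hBn ⟨⟨A1, hA1⟩, ⟨B1, hB1⟩, e1, f1, g1⟩).2.1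
        = (Fmap hAm hBn ⟨⟨A1, hA1⟩, ⟨B1, hB1⟩, e2, f2, g2⟩).2.1 := by
      rw [h']
    have he : e1 = e2 := by
      apply Equiv.ext
      rintro ⟨a, ha⟩
      have h0 := congrFun hf ⟨a, (Finset.mem_powersetCard.mp hA1).1 ha⟩
      simp only [Fmap] at h0
      rw [dif_pos ha, dif_pos ha] at h0
      have h1 := congrArg Subtype.val h0
      exact Subtype.ext h1
    subst he
    have hff : f1 = f2 := by
      funext a
      obtain ⟨a, ha⟩ := a
      have ham : a ∈ Am := (Finset.mem_sdiff.mp ha).1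
      have hna : a ∉ A1 := (Finset.mem_sdiff.mp ha).2
      have := congrFun hf ⟨a, ham⟩
      simp only [Fmap, dif_neg hna] at this
      exact this
    subst hff
    have hgg : g1 = g2 := by
      funext b
      obtain ⟨b, hb⟩ := b
      have hbm : b ∈ Bn := (Finset.mem_sdiff.mp hb).1
      have hnb : b ∉ B1 := (Finset.mem_sdiff.mp hb).2
      have := congrFun hg ⟨b, hbm⟩
      simp only [Fmap, dif_neg hnb] at this
      exact this
    subst hgg
    rfl
  · rintro ⟨⟨f, g, A', B'⟩, h1, h2, h3, h4, h5, h6, h7, h8, h9, h10, h11⟩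
    have hA' : A' ∈ Am.powersetCard i := Finset.mem_powersetCard.mpr ⟨h1, h3⟩
    have hB' : B' ∈ Bn.powersetCard i := Finset.mem_powersetCard.mpr ⟨h2, h4⟩
    have key : ∀ (y : α) (hy : y ∈ B'), (f ⟨(g ⟨y, h2 hy⟩).1, h1 (h8 ⟨y, h2 hy⟩ hy)⟩).1 = y := by
      intro y hy
      obtain ⟨a, haA, hfa⟩ := h7 y hy
      have hg : (g ⟨y, h2 hy⟩).1 = a.1 := h11 a ⟨y, h2 hy⟩ haA hfa
      have : (⟨(g ⟨y, h2 hy⟩).1, h1 (h8 ⟨y, h2 hy⟩ hy)⟩ : {a // a ∈ Am}) = a :=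
        Subtype.ext hg
      rw [this, hfa]
    let e : {x : α // x ∈ A'} ≃ {y : α // y ∈ B'} :=
      { toFun := fun x => ⟨(f ⟨x.1, h1 x.2⟩).1, h5 ⟨x.1, h1 x.2⟩ x.2⟩
        invFun := fun y => ⟨(g ⟨y.1, h2 y.2⟩).1, h8 ⟨y.1, h2 y.2⟩ y.2⟩
        left_inv := by
          rintro ⟨a, ha⟩
          apply Subtype.ext
          exact h11 ⟨a, h1 ha⟩ ⟨(f ⟨a, h1 ha⟩).1, h2 (h5 ⟨a, h1 ha⟩ ha)⟩ ha rfl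
        right_inv := by
          rintro ⟨y, hy⟩
          apply Subtype.ext
          exact key y hy }
    refine ⟨⟨⟨A', hA'⟩, ⟨B', hB'⟩, e,
      fun a => f ⟨a.1, (Finset.mem_sdiff.mp a.2).1⟩,
      fun b => g ⟨b.1, (Finset.mem_sdiff.mp b.2).1⟩⟩, ?_⟩
    apply Subtype.ext
    refine Prod.ext ?_ (Prod.ext ?_ rfl)
    · funext a
      by_cases h : a.1 ∈ A'
      · simp only [FmapS, Fmap, dif_pos h]
        apply Subtype.ext
        show (f ⟨a.1, h1 h⟩).1 = (f a).1
        congr 1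
      · simp only [FmapS, Fmap, dif_neg h]
    · funext b
      by_cases h : b.1 ∈ B'
      · simp only [FmapS, Fmap, dif_pos h]
        apply Subtype.ext
        show (g ⟨b.1, h2 h⟩).1 = (g b).1
        congr 1
      · simp only [FmapS, Fmap, dif_neg h]

end AuxGQ

/-- The number of quadruples `(f, g, A', B')` with `f : A_m → B`, `g : B_n → A`,
`A' ⊆ A_m`, `B' ⊆ B_n`, `|A'| = |B'| = i`, such that `f↾A'` and `g↾B'` are
mutually inverse bijections between `A'` and `B'`, equals
`C(m,i) · C(n,i) · i! · M^{n−i} · N^{m−i}`. -/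
theorem card_goodQuadruples {α : Type*} (A B Am Bn : Finset α) (M N m n i : ℕ)
    (hdisj : Disjoint A B)
    (hAcard : A.card = M) (hBcard : B.card = N)
    (hAm : Am ⊆ A) (hBn : Bn ⊆ B) (hm : Am.card = m) (hn : Bn.card = n)
    (hi : i ≤ min m n) :
    Nat.card {q : ({a // a ∈ Am} → {b // b ∈ B}) × ({b // b ∈ Bn} → {a // a ∈ A})
          × Finset α × Finset α //
        GoodQuadruple Am Bn i q.1 q.2.1 q.2.2.1 q.2.2.2} =
      m.choose i * n.choose i * i.factorial * M ^ (n - i) * N ^ (m - i) := by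
  classical
  rw [← Nat.card_eq_of_bijective _ (FmapS_bijective hAm hBn)]
  have hconst : ∀ (A' : {S : Finset α // S ∈ Am.powersetCard i})
      (B' : {S : Finset α // S ∈ Bn.powersetCard i}),
      Nat.card (({x : α // x ∈ A'.1} ≃ {y : α // y ∈ B'.1}) ×
        ({a : α // a ∈ Am \ A'.1} → {b : α // b ∈ B}) ×
        ({b : α // b ∈ Bn \ B'.1} → {a : α // a ∈ A})) =
      i.factorial * N ^ (m - i) * M ^ (n - i) := by
    intro ⟨A', hA'⟩ ⟨B', hB'⟩
    obtain ⟨hA's, hA'c⟩ := Finset.mem_powersetCard.mp hA'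
    obtain ⟨hB's, hB'c⟩ := Finset.mem_powersetCard.mp hB'
    have c1 : Nat.card {x : α // x ∈ A'} = i := by
      simp [Nat.card_eq_fintype_card, hA'c]
    have c2 : Nat.card {y : α // y ∈ B'} = i := by
      simp [Nat.card_eq_fintype_card, hB'c]
    have ceq : Nat.card ({x : α // x ∈ A'} ≃ {y : α // y ∈ B'}) = i.factorial := by
      have hcc : Fintype.card {x : α // x ∈ A'} = Fintype.card {y : α // y ∈ B'} := by
        simp [hA'c, hB'c]
      rw [Nat.card_eq_fintype_card, Fintype.card_equiv (Fintype.equivOfCardEq hcc)]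
      simp [hA'c]
    have cf : Nat.card ({a : α // a ∈ Am \ A'} → {b : α // b ∈ B}) = N ^ (m - i) := by
      rw [Nat.card_fun]
      congr 1
      · simp [Nat.card_eq_fintype_card, hBcard]
      · rw [Nat.card_eq_fintype_card, Fintype.card_coe, Finset.card_sdiff_of_subset hA's, hm, hA'c]
    have cg : Nat.card ({b : α // b ∈ Bn \ B'} → {a : α // a ∈ A}) = M ^ (n - i) := by
      rw [Nat.card_fun]
      congr 1
      · simp [Nat.card_eq_fintype_card, hAcard]
      · rw [Nat.card_eq_fintype_card, Fintype.card_coe, Finset.card_sdiff_of_subset hB's, hn, hB'c]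
    rw [Nat.card_prod, Nat.card_prod, ceq, cf, cg, mul_assoc]
  have : Nat.card (QT A B Am Bn i) =
      (Am.powersetCard i).card * ((Bn.powersetCard i).card *
        (i.factorial * N ^ (m - i) * M ^ (n - i))) := by
    show Nat.card (Σ A' : {S : Finset α // S ∈ Am.powersetCard i},
      Σ B' : {S : Finset α // S ∈ Bn.powersetCard i},
        ({x : α // x ∈ A'.1} ≃ {y : α // y ∈ B'.1}) ×
        ({a : α // a ∈ Am \ A'.1} → {b : α // b ∈ B}) ×
        ({b : α // b ∈ Bn \ B'.1} → {a : α // a ∈ A})) = _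
    rw [Nat.card_eq_fintype_card, Fintype.card_sigma]
    have : ∀ A' : {S : Finset α // S ∈ Am.powersetCard i},
        Fintype.card (Σ B' : {S : Finset α // S ∈ Bn.powersetCard i},
          ({x : α // x ∈ A'.1} ≃ {y : α // y ∈ B'.1}) ×
          ({a : α // a ∈ Am \ A'.1} → {b : α // b ∈ B}) ×
          ({b : α // b ∈ Bn \ B'.1} → {a : α // a ∈ A})) =
        (Bn.powersetCard i).card * (i.factorial * N ^ (m - i) * M ^ (n - i)) := by
      intro A'
      rw [Fintype.card_sigma]
      have : ∀ B' : {S : Finset α // S ∈ Bn.powersetCard i},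
          Fintype.card (({x : α // x ∈ A'.1} ≃ {y : α // y ∈ B'.1}) ×
          ({a : α // a ∈ Am \ A'.1} → {b : α // b ∈ B}) ×
          ({b : α // b ∈ Bn \ B'.1} → {a : α // a ∈ A})) =
          i.factorial * N ^ (m - i) * M ^ (n - i) := by
        intro B'
        rw [← Nat.card_eq_fintype_card]
        exact hconst A' B'
      simp only [this, Finset.sum_const, Finset.card_univ, Fintype.card_coe, smul_eq_mul]
    simp only [this, Finset.sum_const, Finset.card_univ, Fintype.card_coe, smul_eq_mul]
  rw [this, Finset.card_powersetCard, Finset.card_powersetCard, hm, hn]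
  ring
end
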